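/- arXiv:1602.02269 — 8 statements merged into one kernel-verified Lean document; each statement's English description precedes it below -/
import Mathlib

section
/- For a regulated function f : [a,b] → E into a metric space (E,d), the truncated variation TV(f,[a,b],c) := sup over finite partitions a ≤ t₀ < t₁ < ... < tₙ ≤ b of Σᵢ max{d(f(tᵢ), f(tᵢ₋₁)) − c, 0} is a lower bound for the total variation of any function g : [a,b] → E satisfying sup_{t∈[a,b]} d(f(t), g(t)) ≤ c/2. That is, if g is within uniform distance c/2 of f, then TV(g,[a,b],0) ≥ TV(f,[a,b],c). -/
open Set Filter Topology ENNReal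

noncomputable def truncVar {E : Type*} [PseudoMetricSpace E] (f : ℝ → E) (a b δ : ℝ) : ℝ≥0∞ :=
  ⨆ (n : ℕ) (t : Fin (n + 1) → ℝ) (_ : StrictMono t) (_ : ∀ i, t i ∈ Set.Icc a b),
    ENNReal.ofReal (∑ i : Fin n, max (dist (f (t i.succ)) (f (t i.castSucc)) - δ) 0)

def Regulated {E : Type*} [PseudoMetricSpace E] (f : ℝ → E) (a b : ℝ) : Prop :=
  (∀ t ∈ Set.Ico a b, ∃ L, Filter.Tendsto f (nhdsWithin t (Set.Ioi t)) (nhds L)) ∧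
  (∀ t ∈ Set.Ioc a b, ∃ L, Filter.Tendsto f (nhdsWithin t (Set.Iio t)) (nhds L))

theorem stmt_0 {E : Type*} [PseudoMetricSpace E] (a b c : ℝ) (hab : a < b) (hc : 0 < c)
    (f g : ℝ → E) (hf : Regulated f a b)
    (hg : ∀ t ∈ Set.Icc a b, dist (f t) (g t) ≤ c / 2) :
    truncVar f a b c ≤ truncVar g a b 0 := by
  refine iSup_le fun n => iSup_le fun t => iSup_le fun hmono => iSup_le fun hmem => ?_
  refine le_trans ?_ (le_iSup_of_le n (le_iSup_of_le t (le_iSup_of_le hmono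
    (le_iSup_of_le hmem le_rfl))))
  apply ENNReal.ofReal_le_ofReal
  apply Finset.sum_le_sum
  intro i _
  have h1 : dist (f (t i.succ)) (f (t i.castSucc)) ≤
      dist (g (t i.succ)) (g (t i.castSucc)) + c := by
    have ha := hg _ (hmem i.succ)
    have hb := hg _ (hmem i.castSucc)
    calc dist (f (t i.succ)) (f (t i.castSucc))
        ≤ dist (f (t i.succ)) (g (t i.succ)) + dist (g (t i.succ)) (g (t i.castSucc))
          + dist (g (t i.castSucc)) (f (t i.castSucc)) := dist_triangle4 _ _ _ _
      _ ≤ c / 2 + dist (g (t i.succ)) (g (t i.castSucc)) + c / 2 := by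
          rw [dist_comm (g (t i.castSucc))]; linarith
      _ = dist (g (t i.succ)) (g (t i.castSucc)) + c := by ring
  have h2 : (0:ℝ) ≤ dist (g (t i.succ)) (g (t i.castSucc)) := dist_nonneg
  rw [max_le_iff]
  constructor
  · calc dist (f (t i.succ)) (f (t i.castSucc)) - c
        ≤ dist (g (t i.succ)) (g (t i.castSucc)) - 0 := by linarith
      _ ≤ max (dist (g (t i.succ)) (g (t i.castSucc)) - 0) 0 := le_max_left _ _
  · exact le_max_right _ _
end

section
/- For any regulated function f : [a,b] → E into a metric space and any c > 0 and λ > 1, there exists a step function f^c : [a,b] → E with sup_{t∈[a,b]} d(f(t), f^c(t)) ≤ c/2 and total variation TV(f^c,[a,b],0) ≤ λ · TV(f,[a,b],(λ−1)c/(2λ)). Consequently, inf over g with ‖f − g‖_∞ ≤ c/2 of the total variation of g satisfies TV(f,[a,b],c) ≤ inf_g TV(g,[a,b],0) ≤ inf_{λ>1} λ · TV(f,[a,b],(λ−1)c/(2λ)). -/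
open Set Filter Topology ENNReal

def IsStepOn {E : Type*} (f : ℝ → E) (a b : ℝ) : Prop :=
  ∃ n : ℕ, ∃ t : Fin (n + 1) → ℝ, Monotone t ∧ t 0 = a ∧ t (Fin.last n) = b ∧
    ∀ i : Fin n, ∀ x ∈ Set.Ioo (t i.castSucc) (t i.succ),
      ∀ y ∈ Set.Ioo (t i.castSucc) (t i.succ), f x = f y

/-!
Greedy construction with `r = c / 2`: keep the current value `v` until the first time `f` leaves
the closed `r`-ball around `v`; at that exit time take the value of `f` if it is outside the ball,
and on the next plateau switch to the right limit of `f` unless the current value is still within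
`r` of it. Right limits make every plateau nondegenerate, and a left limit at the supremum of the
exit times rules out infinitely many of them, so finitely many steps reach `b`.

Every nonzero jump `J` of the resulting step function satisfies `J ≥ r`, hence
`J ≤ λ (J - (λ - 1) r / λ)`, and it is realized up to an arbitrary `ε` by an increment of `f`
between increasing points; summing gives the variation bound. The lower bound is the triangle
inequality: a perturbation of size `c / 2` changes every increment by at most `c`.
-/

section Partitions

variable {E : Type*} [PseudoMetricSpace E]

theorem ofReal_sum_le_truncVar (f : ℝ → E) {a b δ : ℝ} {n : ℕ} {t : Fin (n + 1) → ℝ}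
    (ht : StrictMono t) (htI : ∀ i, t i ∈ Icc a b) :
    ENNReal.ofReal (∑ i : Fin n, max (dist (f (t i.succ)) (f (t i.castSucc)) - δ) 0) ≤
      truncVar f a b δ :=
  le_iSup₂_of_le n t (le_iSup₂_of_le (f := fun _ _ => _) ht htI le_rfl)

theorem truncVar_le_of_dist_le {f g : ℝ → E} {a b r : ℝ} (δ : ℝ)
    (hfg : ∀ t ∈ Icc a b, dist (f t) (g t) ≤ r) :
    truncVar f a b (δ + 2 * r) ≤ truncVar g a b δ := by
  refine iSup_le fun n => iSup_le fun t => iSup_le fun ht => iSup_le fun htI => ?_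
  refine le_trans (ENNReal.ofReal_le_ofReal (Finset.sum_le_sum fun i _ => ?_))
    (ofReal_sum_le_truncVar g ht htI)
  have := dist_triangle4 (f (t i.succ)) (g (t i.succ)) (g (t i.castSucc)) (f (t i.castSucc))
  have := hfg _ (htI i.succ)
  have := dist_comm (f (t i.castSucc)) (g (t i.castSucc)) ▸ hfg _ (htI i.castSucc)
  exact max_le_max (by linarith) le_rfl

theorem Fin.strictMono_snoc {α : Type*} [Preorder α] {n : ℕ} {x : Fin (n + 1) → α}
    (hx : StrictMono x) {y : α} (hy : x (Fin.last n) < y) :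
    StrictMono (Fin.snoc x y : Fin (n + 2) → α) := by
  simpa only [Fin.insertNth_last'] using Fin.strictMono_insertNth_last hx y hy

theorem Fin.sum_snoc_succ_castSucc {α M : Type*} [AddCommMonoid M] (φ : α → α → M) {n : ℕ}
    (x : Fin (n + 1) → α) (y : α) :
    ∑ i : Fin (n + 1), φ ((Fin.snoc x y : Fin (n + 2) → α) i.succ)
        ((Fin.snoc x y : Fin (n + 2) → α) i.castSucc) =
      ∑ i : Fin n, φ (x i.succ) (x i.castSucc) + φ y (x (Fin.last n)) := by
  simp only [Fin.sum_univ_castSucc (n := n), Fin.succ_castSucc, Fin.snoc_castSucc, Fin.succ_last,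
    Fin.snoc_last]

theorem Fin.sum_succ_sub_castSucc {G : Type*} [AddCommGroup G] {n : ℕ} (g : Fin (n + 1) → G) :
    ∑ i : Fin n, (g i.succ - g i.castSucc) = g (Fin.last n) - g 0 := by
  induction n with
  | zero => simp
  | succ n ih =>
    rw [Fin.sum_univ_castSucc]
    simp only [Fin.succ_castSucc]
    rw [ih (fun i => g i.castSucc), Fin.castSucc_zero, Fin.succ_last]
    abel

theorem truncVar_comp_le_sum_dist (u : ℕ → E) {ρ : ℝ → ℕ} (hρ : Monotone ρ) {a b : ℝ}
    {M : ℕ} (hρM : ∀ t ∈ Icc a b, ρ t ≤ M) :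
    truncVar (fun t => u (ρ t)) a b 0 ≤
      ENNReal.ofReal (∑ m ∈ Finset.range M, dist (u (m + 1)) (u m)) := by
  set F : ℕ → ℝ := fun j => ∑ m ∈ Finset.range j, dist (u (m + 1)) (u m)
  have hF : Monotone F := fun i j hij => Finset.sum_le_sum_of_subset_of_nonneg
    (Finset.range_subset_range.2 hij) fun _ _ _ => dist_nonneg
  refine iSup_le fun n => iSup_le fun t => iSup_le fun ht => iSup_le fun htI => ?_
  refine ENNReal.ofReal_le_ofReal ?_
  calc ∑ i : Fin n, max (dist (u (ρ (t i.succ))) (u (ρ (t i.castSucc))) - 0) 0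
      ≤ ∑ i : Fin n, (F (ρ (t i.succ)) - F (ρ (t i.castSucc))) := by
        refine Finset.sum_le_sum fun i _ => ?_
        have hle : ρ (t i.castSucc) ≤ ρ (t i.succ) := hρ (ht.monotone i.castSucc_le_succ)
        rw [sub_zero, max_eq_left dist_nonneg, dist_comm, ← Finset.sum_Ico_eq_sub _ hle]
        exact dist_le_Ico_sum_dist u hle |>.trans_eq (by simp only [dist_comm])
    _ = F (ρ (t (Fin.last n))) - F (ρ (t 0)) := Fin.sum_succ_sub_castSucc fun i => F (ρ (t i))
    _ ≤ F M := by
        have := hF (hρM _ (htI (Fin.last n)))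
        have : 0 ≤ F (ρ (t 0)) := Finset.sum_nonneg fun _ _ => dist_nonneg
        linarith

end Partitions

section Chain

variable {E : Type*} [PseudoMetricSpace E]

theorem le_mul_max_sub_of_le {l δ r J d e : ℝ} (hl : 1 < l) (hδ : l * δ = (l - 1) * r)
    (hJ : r ≤ J) (hd : J - e ≤ d) : J - l * e ≤ l * max (d - δ) 0 := by
  have := mul_le_mul_of_nonneg_left (le_max_left (d - δ) 0) (by linarith : 0 ≤ l)
  nlinarith [mul_le_mul_of_nonneg_left hJ (by linarith : (0 : ℝ) ≤ l - 1)]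

theorem exists_partition_of_chain (f : ℝ → E) {a b r δ l ε : ℝ} (hl : 1 < l)
    (hδ : l * δ = (l - 1) * r) (hε : 0 ≤ ε) {u : ℕ → E} {y : ℕ → ℝ}
    (hy0 : dist (f (y 0)) (u 0) ≤ ε) {M : ℕ} (hy : ∀ m < M, y m < y (m + 1))
    (hyI : ∀ m ≤ M, y m ∈ Icc a b)
    (hu : ∀ m < M, u (m + 1) = u m ∨
      r ≤ dist (u (m + 1)) (u m) ∧ dist (f (y (m + 1))) (u (m + 1)) ≤ ε) :
    ∃ (n : ℕ) (x : Fin (n + 1) → ℝ), StrictMono x ∧ (∀ i, x i ∈ Icc a b) ∧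
      x (Fin.last n) ≤ y M ∧ dist (f (x (Fin.last n))) (u M) ≤ ε ∧
      ∑ m ∈ Finset.range M, dist (u (m + 1)) (u m) - 2 * l * ε * M ≤
        l * ∑ i : Fin n, max (dist (f (x i.succ)) (f (x i.castSucc)) - δ) 0 := by
  induction M with
  | zero =>
    refine ⟨0, fun _ => y 0, Fin.strictMono_iff_lt_succ.2 finZeroElim, fun _ => hyI 0 le_rfl,
      le_rfl, hy0, ?_⟩
    simp
  | succ M ih =>
    obtain ⟨n, x, hx, hxI, hxM, hxu, hsum⟩ := ih (fun m hm => hy m (by omega))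
      (fun m hm => hyI m (by omega)) (fun m hm => hu m (by omega))
    have hlε : 0 ≤ l * ε := by positivity
    rw [Finset.sum_range_succ]
    push_cast
    rcases hu M M.lt_succ_self with hstay | ⟨hjump, hclose⟩
    · refine ⟨n, x, hx, hxI, hxM.trans (hy M M.lt_succ_self).le, hstay ▸ hxu, ?_⟩
      rw [hstay, dist_self]
      linarith
    · refine ⟨n + 1, Fin.snoc x (y (M + 1)), Fin.strictMono_snoc hx ?_, ?_, by simp, by simpa,
        ?_⟩
      · exact hxM.trans_lt (hy M M.lt_succ_self)
      · exact Fin.lastCases (by simpa using hyI _ le_rfl) (fun i => by simpa using hxI i)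
      · rw [Fin.sum_snoc_succ_castSucc (fun p q => max (dist (f p) (f q) - δ) 0)]
        have htri := dist_triangle4 (u (M + 1)) (f (y (M + 1))) (f (x (Fin.last n))) (u M)
        have := le_mul_max_sub_of_le (d := dist (f (y (M + 1))) (f (x (Fin.last n))))
          (e := 2 * ε) hl hδ hjump (by rw [dist_comm] at hclose; linarith)
        linarith

theorem ofReal_sum_dist_le_of_chain (f : ℝ → E) {a b r δ l ε : ℝ} (hl : 1 < l)
    (hδ : l * δ = (l - 1) * r) (hε : 0 ≤ ε) {u : ℕ → E} {y : ℕ → ℝ}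
    (hy0 : dist (f (y 0)) (u 0) ≤ ε) {M : ℕ} (hy : ∀ m < M, y m < y (m + 1))
    (hyI : ∀ m ≤ M, y m ∈ Icc a b)
    (hu : ∀ m < M, u (m + 1) = u m ∨
      r ≤ dist (u (m + 1)) (u m) ∧ dist (f (y (m + 1))) (u (m + 1)) ≤ ε) :
    ENNReal.ofReal (∑ m ∈ Finset.range M, dist (u (m + 1)) (u m)) ≤
      ENNReal.ofReal l * truncVar f a b δ + ENNReal.ofReal (2 * l * ε * M) := by
  obtain ⟨n, x, hx, hxI, -, -, hsum⟩ := exists_partition_of_chain f hl hδ hε hy0 hy hyI hu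
  calc ENNReal.ofReal (∑ m ∈ Finset.range M, dist (u (m + 1)) (u m))
      ≤ ENNReal.ofReal (l * ∑ i : Fin n, max (dist (f (x i.succ)) (f (x i.castSucc)) - δ) 0) +
          ENNReal.ofReal (2 * l * ε * M) :=
        (ENNReal.ofReal_le_ofReal (by linarith)).trans ENNReal.ofReal_add_le
    _ ≤ ENNReal.ofReal l * truncVar f a b δ + ENNReal.ofReal (2 * l * ε * M) := by
        rw [ENNReal.ofReal_mul (by linarith)]
        gcongr
        exact ofReal_sum_le_truncVar f hx hxI

end Chain

section NodeIndex

variable {n : ℕ} {T : Fin (n + 1) → ℝ}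

/-- `2 * k` at the node `T k` and `2 * k + 1` on the gap `(T k, T (k + 1))`. -/
noncomputable def nodeIndex (T : Fin (n + 1) → ℝ) (t : ℝ) : ℕ :=
  (Finset.univ.filter fun j => T j < t).card + (Finset.univ.filter fun j => T j ≤ t).card - 1

theorem nodeIndex_mono : Monotone (nodeIndex T) := fun _ _ hst =>
  Nat.sub_le_sub_right (add_le_add
    (Finset.card_le_card (Finset.monotone_filter_right _ fun _ _ h => h.trans_le hst))
    (Finset.card_le_card (Finset.monotone_filter_right _ fun _ _ h => h.trans hst))) 1

theorem nodeIndex_le {t : ℝ} (ht : t ≤ T (Fin.last n)) : nodeIndex T t ≤ 2 * n := by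
  have hlt : (Finset.univ.filter fun j => T j < t).card ≤ n := by
    calc _ ≤ (Finset.univ.erase (Fin.last n)).card :=
          Finset.card_le_card fun j hj => Finset.mem_erase.2
            ⟨fun h => by simp_all [not_lt_of_ge ht], Finset.mem_univ j⟩
      _ = n := by simp
  have hle := (Finset.card_filter_le Finset.univ fun j => T j ≤ t).trans_eq (Finset.card_fin _)
  unfold nodeIndex
  omega

theorem nodeIndex_apply (hT : StrictMono T) (k : Fin (n + 1)) : nodeIndex T (T k) = 2 * k := by
  have hlt : (Finset.univ.filter fun j => T j < T k) = Finset.Iio k := by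
    ext j; simp [hT.lt_iff_lt]
  have hle : (Finset.univ.filter fun j => T j ≤ T k) = Finset.Iic k := by
    ext j; simp [hT.le_iff_le]
  simp only [nodeIndex, hlt, hle, Fin.card_Iio, Fin.card_Iic]
  omega

theorem nodeIndex_of_mem_Ioo (hT : StrictMono T) {i : Fin n} {t : ℝ}
    (ht : t ∈ Ioo (T i.castSucc) (T i.succ)) : nodeIndex T t = 2 * i + 1 := by
  have hlt : (Finset.univ.filter fun j => T j < t) = Finset.Iic i.castSucc := by
    ext j
    simp only [Finset.mem_filter, Finset.mem_univ, true_and, Finset.mem_Iic]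
    refine ⟨fun h => Fin.le_castSucc_iff.2 (hT.lt_iff_lt.1 (h.trans ht.2)), fun h => ?_⟩
    exact (hT.monotone h).trans_lt ht.1
  have hle : (Finset.univ.filter fun j => T j ≤ t) = Finset.Iic i.castSucc := by
    ext j
    simp only [Finset.mem_filter, Finset.mem_univ, true_and, Finset.mem_Iic]
    refine ⟨fun h => Fin.le_castSucc_iff.2 (hT.lt_iff_lt.1 (h.trans_lt ht.2)), fun h => ?_⟩
    exact (hT.monotone h).trans ht.1.le
  simp only [nodeIndex, hlt, hle, Fin.card_Iic, Fin.val_castSucc]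
  omega

theorem exists_eq_or_mem_Ioo {t : ℝ} (ht : t ∈ Icc (T 0) (T (Fin.last n))) :
    (∃ k, T k = t) ∨ ∃ i : Fin n, t ∈ Ioo (T i.castSucc) (T i.succ) := by
  by_contra! h
  have hlt : ∀ k, T k < t := Fin.induction (ht.1.lt_of_ne (h.1 0))
    fun i hi => (not_lt.1 fun hit => h.2 i ⟨hi, hit⟩).lt_of_ne (h.1 _)
  exact (hlt (Fin.last n)).not_ge ht.2

theorem isStepOn_comp_nodeIndex {E : Type*} (hT : StrictMono T) (u : ℕ → E) :
    IsStepOn (fun t => u (nodeIndex T t)) (T 0) (T (Fin.last n)) :=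
  ⟨n, T, hT.monotone, rfl, rfl, fun i x hx y hy => by
    simp only [nodeIndex_of_mem_Ioo hT hx, nodeIndex_of_mem_Ioo hT hy]⟩

def interleave {α : Type*} (p q : ℕ → α) (m : ℕ) : α :=
  if Even m then p (m / 2) else q (m / 2)

@[simp]
theorem interleave_two_mul {α : Type*} (p q : ℕ → α) (k : ℕ) :
    interleave p q (2 * k) = p k := by
  simp [interleave]

@[simp]
theorem interleave_two_mul_add_one {α : Type*} (p q : ℕ → α) (k : ℕ) :
    interleave p q (2 * k + 1) = q k := by
  simp [interleave, Nat.mul_add_div]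

end NodeIndex

section ExitTime

variable {E : Type*} [PseudoMetricSpace E] (f : ℝ → E)

open Classical in
noncomputable def rightLim (t : ℝ) : E :=
  if h : ∃ L, Tendsto f (𝓝[>] t) (𝓝 L) then h.choose else f t

theorem Regulated.tendsto_rightLim {f : ℝ → E} {a b t : ℝ} (hf : Regulated f a b)
    (ht : t ∈ Ico a b) : Tendsto f (𝓝[>] t) (𝓝 (rightLim f t)) := by
  have h := hf.1 t ht
  rw [rightLim, dif_pos h]
  exact h.choose_spec

theorem exists_dist_rightLim_le {f : ℝ → E} {a b t s ε : ℝ} (hf : Regulated f a b)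
    (ht : t ∈ Ico a b) (hts : t < s) (hε : 0 < ε) :
    ∃ w ∈ Ioo t s, dist (f w) (rightLim f t) ≤ ε := by
  obtain ⟨w, hwε, hw⟩ := ((Metric.tendsto_nhds.1 (hf.tendsto_rightLim ht) ε hε).and
    (Ioo_mem_nhdsGT hts)).exists
  exact ⟨w, hw, hwε.le⟩

theorem exists_Ioo_dist_lt {s r : ℝ} {L v : E} (hL : Tendsto f (𝓝[>] s) (𝓝 L))
    (hLv : dist L v < r) : ∃ η > s, ∀ t ∈ Ioo s η, dist (f t) v < r :=
  mem_nhdsGT_iff_exists_Ioo_subset.1 ((hL.dist tendsto_const_nhds).eventually_lt_const hLv)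

noncomputable def exitTime (b r s : ℝ) (v : E) : ℝ :=
  sInf (insert b {t ∈ Ioc s b | r < dist (f t) v})

variable {f} {b r s : ℝ} {v : E}

theorem bddBelow_exitSet :
    BddBelow (insert b {t ∈ Ioc s b | r < dist (f t) v}) :=
  ⟨min s b, by
    rintro _ (rfl | ⟨⟨hst, -⟩, -⟩)
    exacts [min_le_right _ _, (min_le_left _ _).trans hst.le]⟩

theorem exitTime_le : exitTime f b r s v ≤ b :=
  csInf_le bddBelow_exitSet (mem_insert _ _)

theorem exitTime_le_of_lt_dist {t : ℝ} (ht : t ∈ Ioc s b) (h : r < dist (f t) v) :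
    exitTime f b r s v ≤ t :=
  csInf_le bddBelow_exitSet (mem_insert_of_mem _ ⟨ht, h⟩)

theorem le_exitTime (hsb : s ≤ b) : s ≤ exitTime f b r s v :=
  le_csInf (insert_nonempty _ _) (by rintro _ (rfl | ⟨⟨hst, -⟩, -⟩); exacts [hsb, hst.le])

theorem dist_le_of_lt_exitTime {t : ℝ} (hst : s < t) (hte : t < exitTime f b r s v) :
    dist (f t) v ≤ r :=
  not_lt.1 fun h => (exitTime_le_of_lt_dist ⟨hst, (hte.trans_le exitTime_le).le⟩ h).not_gt hte

theorem exists_lt_dist_of_exitTime_lt {z : ℝ} (hz : exitTime f b r s v < z) (hzb : z ≤ b) :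
    ∃ t ∈ Ioc s b, r < dist (f t) v ∧ t < z := by
  obtain ⟨t, ht | ht, htz⟩ := exists_lt_of_csInf_lt (insert_nonempty _ _) hz
  · exact absurd (ht ▸ htz) hzb.not_gt
  · exact ⟨t, ht.1, ht.2, htz⟩

theorem lt_exitTime {L : E} (hsb : s < b) (hL : Tendsto f (𝓝[>] s) (𝓝 L))
    (hLv : dist L v < r) :
    s < exitTime f b r s v := by
  obtain ⟨η, hsη, hη⟩ := exists_Ioo_dist_lt f hL hLv
  refine (lt_min hsη hsb).trans_le (le_csInf (insert_nonempty _ _) ?_)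
  rintro _ (rfl | ⟨⟨hst, -⟩, hfar⟩)
  · exact min_le_right _ _
  · exact (min_le_left _ _).trans (not_lt.1 fun htη => (hη _ ⟨hst, htη⟩).not_gt hfar)

theorem le_dist_of_exitTime_lt {L : E} (heb : exitTime f b r s v < b)
    (hfe : dist (f (exitTime f b r s v)) v ≤ r)
    (hL : Tendsto f (𝓝[>] (exitTime f b r s v)) (𝓝 L)) : r ≤ dist L v := by
  by_contra! hLv
  obtain ⟨η, heη, hη⟩ := exists_Ioo_dist_lt f hL hLv
  obtain ⟨t, hts, hfar, htη⟩ :=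
    exists_lt_dist_of_exitTime_lt (lt_min heη heb) (min_le_right _ _)
  have het : exitTime f b r s v < t :=
    (exitTime_le_of_lt_dist hts hfar).lt_of_ne (by rintro rfl; linarith)
  exact (hη t ⟨het, htη.trans_le (min_le_left _ _)⟩).not_gt hfar

end ExitTime

section Greedy

variable {E : Type*} [PseudoMetricSpace E] (f : ℝ → E)

noncomputable def nodeValue (r t : ℝ) (v : E) : E :=
  if r < dist (f t) v then f t else v

noncomputable def plateauValue (r t : ℝ) (p : E) : E :=
  if dist (rightLim f t) p < r then p else rightLim f t

noncomputable def greedy (a b r : ℝ) : ℕ → ℝ × E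
  | 0 => (a, plateauValue f r a (f a))
  | k + 1 =>
    let τ := exitTime f b r (greedy a b r k).1 (greedy a b r k).2
    (τ, plateauValue f r τ (nodeValue f r τ (greedy a b r k).2))

noncomputable def greedyTime (a b r : ℝ) (k : ℕ) : ℝ := (greedy f a b r k).1

noncomputable def greedyPlateau (a b r : ℝ) (k : ℕ) : E := (greedy f a b r k).2

noncomputable def greedyNode (a b r : ℝ) : ℕ → E
  | 0 => f a
  | k + 1 => nodeValue f r (greedyTime f a b r (k + 1)) (greedyPlateau f a b r k)

variable {f} {a b r t : ℝ}

theorem dist_nodeValue_le (hr : 0 ≤ r) (v : E) : dist (f t) (nodeValue f r t v) ≤ r := by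
  unfold nodeValue
  split_ifs with h
  · simpa using hr
  · exact not_lt.1 h

theorem nodeValue_eq_or (v : E) :
    nodeValue f r t v = v ∧ dist (f t) v ≤ r ∨
      nodeValue f r t v = f t ∧ r < dist (f t) v := by
  unfold nodeValue
  split_ifs with h
  exacts [Or.inr ⟨rfl, h⟩, Or.inl ⟨rfl, not_lt.1 h⟩]

theorem dist_rightLim_plateauValue_lt (hr : 0 < r) (p : E) :
    dist (rightLim f t) (plateauValue f r t p) < r := by
  unfold plateauValue
  split_ifs with h
  · exact h
  · simpa using hr

theorem plateauValue_eq_or (p : E) :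
    plateauValue f r t p = p ∧ dist (rightLim f t) p < r ∨
      plateauValue f r t p = rightLim f t ∧ r ≤ dist (rightLim f t) p := by
  unfold plateauValue
  split_ifs with h
  exacts [Or.inl ⟨rfl, h⟩, Or.inr ⟨rfl, not_lt.1 h⟩]

theorem greedyTime_zero : greedyTime f a b r 0 = a := rfl

theorem greedyTime_succ (k : ℕ) :
    greedyTime f a b r (k + 1) =
      exitTime f b r (greedyTime f a b r k) (greedyPlateau f a b r k) :=
  rfl

theorem greedyPlateau_eq (k : ℕ) :
    greedyPlateau f a b r k =
      plateauValue f r (greedyTime f a b r k) (greedyNode f a b r k) := by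
  cases k <;> rfl

theorem greedyPlateau_eq_or_le_dist (k : ℕ) :
    greedyPlateau f a b r k = greedyNode f a b r k ∨
      greedyPlateau f a b r k = rightLim f (greedyTime f a b r k) ∧
        r ≤ dist (greedyPlateau f a b r k) (greedyNode f a b r k) := by
  rw [greedyPlateau_eq]
  obtain ⟨hp, -⟩ | ⟨hp, hfar⟩ := plateauValue_eq_or (f := f) (r := r)
    (t := greedyTime f a b r k) (greedyNode f a b r k)
  exacts [Or.inl hp, Or.inr ⟨hp, hp ▸ hfar⟩]

theorem greedyNode_succ_eq_or_le_dist (k : ℕ) :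
    greedyNode f a b r (k + 1) = greedyPlateau f a b r k ∨
      greedyNode f a b r (k + 1) = f (greedyTime f a b r (k + 1)) ∧
        r ≤ dist (greedyNode f a b r (k + 1)) (greedyPlateau f a b r k) := by
  obtain ⟨hn, -⟩ | ⟨hn, hfar⟩ := nodeValue_eq_or (f := f) (r := r)
    (t := greedyTime f a b r (k + 1)) (greedyPlateau f a b r k)
  exacts [Or.inl hn, Or.inr ⟨hn, (hn ▸ hfar).le⟩]

theorem dist_greedyNode_le (hr : 0 ≤ r) (k : ℕ) :
    dist (f (greedyTime f a b r k)) (greedyNode f a b r k) ≤ r := by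
  cases k with
  | zero => simpa [greedyNode, greedyTime_zero] using hr
  | succ k => exact dist_nodeValue_le hr _

theorem greedyTime_le (hab : a ≤ b) (k : ℕ) : greedyTime f a b r k ≤ b := by
  cases k with
  | zero => exact hab
  | succ k => exact exitTime_le

theorem greedyTime_le_succ (hab : a ≤ b) (k : ℕ) :
    greedyTime f a b r k ≤ greedyTime f a b r (k + 1) :=
  le_exitTime (greedyTime_le hab k)

theorem greedyTime_mono (hab : a ≤ b) : Monotone (greedyTime f a b r) :=
  monotone_nat_of_le_succ (greedyTime_le_succ hab)

theorem greedyTime_mem_Ico (hab : a ≤ b) {k : ℕ} (hk : greedyTime f a b r k < b) :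
    greedyTime f a b r k ∈ Ico a b :=
  ⟨greedyTime_mono hab (Nat.zero_le k), hk⟩

theorem greedyTime_lt_succ (hab : a ≤ b) (hr : 0 < r) (hf : Regulated f a b) {k : ℕ}
    (hk : greedyTime f a b r k < b) : greedyTime f a b r k < greedyTime f a b r (k + 1) := by
  rw [greedyTime_succ]
  refine lt_exitTime hk (hf.tendsto_rightLim (greedyTime_mem_Ico hab hk)) ?_
  rw [greedyPlateau_eq]
  exact dist_rightLim_plateauValue_lt hr _

theorem greedyPlateau_eq_apply_or_eq_rightLim (hab : a ≤ b) (hf : Regulated f a b) {k : ℕ}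
    (hk : greedyTime f a b r k < b) :
    greedyPlateau f a b r k = f (greedyTime f a b r k) ∨
      greedyPlateau f a b r k = rightLim f (greedyTime f a b r k) := by
  rw [greedyPlateau_eq]
  obtain ⟨hp, hkeep⟩ | ⟨hp, -⟩ := plateauValue_eq_or (f := f) (r := r)
    (t := greedyTime f a b r k) (greedyNode f a b r k)
  swap; · exact Or.inr hp
  rw [hp]
  cases k with
  | zero => exact Or.inl rfl
  | succ k =>
    obtain ⟨hn, hnear⟩ | ⟨hn, -⟩ := nodeValue_eq_or (f := f) (r := r)
      (t := greedyTime f a b r (k + 1)) (greedyPlateau f a b r k)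
    swap; · exact Or.inl hn
    rw [greedyNode, hn] at hkeep
    rw [greedyTime_succ] at hk hnear hkeep
    have := le_dist_of_exitTime_lt hk hnear
      (hf.tendsto_rightLim (greedyTime_mem_Ico (k := k + 1) hab hk))
    exact absurd hkeep this.not_gt

theorem exists_greedyTime_eq (hab : a ≤ b) (hr : 0 < r) (hf : Regulated f a b) :
    ∃ N, greedyTime f a b r N = b := by
  by_contra! hne
  have hlt : ∀ k, greedyTime f a b r k < b := fun k => (greedyTime_le hab k).lt_of_ne (hne k)
  have hmono : StrictMono (greedyTime f a b r) :=
    strictMono_nat_of_lt_succ fun k => greedyTime_lt_succ hab hr hf (hlt k)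
  have hbdd : BddAbove (range (greedyTime f a b r)) :=
    ⟨b, by rintro _ ⟨k, rfl⟩; exact (hlt k).le⟩
  set T := ⨆ k, greedyTime f a b r k
  have hltT : ∀ k, greedyTime f a b r k < T := fun k =>
    (hmono k.lt_succ_self).trans_le (le_ciSup hbdd _)
  have hTb : T ≤ b := ciSup_le fun k => (hlt k).le
  obtain ⟨L, hL⟩ := hf.2 T ⟨hltT 0, hTb⟩
  obtain ⟨η, hηT, hη⟩ := mem_nhdsLT_iff_exists_Ioo_subset.1 ((hL.dist tendsto_const_nhds)
    |>.eventually_lt_const (show dist L L < r / 2 by simpa using half_pos hr))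
  obtain ⟨k, hk⟩ := ((tendsto_atTop_ciSup hmono.monotone hbdd).eventually
    (lt_mem_nhds hηT)).exists
  have hclose : ∀ t ∈ Ioo (greedyTime f a b r k) T, dist (f t) L < r / 2 := fun t ht =>
    hη ⟨hk.trans ht.1, ht.2⟩
  have hvL : dist (greedyPlateau f a b r k) L ≤ r / 2 := by
    rcases greedyPlateau_eq_apply_or_eq_rightLim hab hf (hlt k) with h | h <;> rw [h]
    · exact (hη ⟨hk, hltT k⟩).le
    · refine le_of_tendsto ((hf.tendsto_rightLim (greedyTime_mem_Ico hab (hlt k))).dist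
        tendsto_const_nhds) ?_
      filter_upwards [Ioo_mem_nhdsGT (hltT k)] with t ht using (hclose t ht).le
  obtain ⟨t, hts, hfar, htT⟩ := exists_lt_dist_of_exitTime_lt (hltT (k + 1)) hTb
  change r < dist (f t) (greedyPlateau f a b r k) at hfar
  have := dist_triangle (f t) L (greedyPlateau f a b r k)
  have := hclose t ⟨hts.1, htT⟩
  rw [dist_comm] at hvL
  linarith

end Greedy

section StepApproximation

variable {E : Type*} [PseudoMetricSpace E] {f : ℝ → E} {a b r : ℝ}

theorem ofReal_sum_dist_greedy_le_add (hab : a ≤ b) (hr : 0 < r) (hf : Regulated f a b) {l : ℝ}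
    (hl : 1 < l) {N : ℕ} (hN : ∀ k < N, greedyTime f a b r k < b) {ε : ℝ} (hε : 0 < ε) :
    ENNReal.ofReal (∑ m ∈ Finset.range (2 * N),
      dist (interleave (greedyNode f a b r) (greedyPlateau f a b r) (m + 1))
        (interleave (greedyNode f a b r) (greedyPlateau f a b r) m)) ≤
      ENNReal.ofReal l * truncVar f a b ((l - 1) * r / l) +
        ENNReal.ofReal (2 * l * ε * ↑(2 * N)) := by
  have hw : ∀ k, ∃ w, k < N →
      w ∈ Ioo (greedyTime f a b r k) (greedyTime f a b r (k + 1)) ∧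
        dist (f w) (rightLim f (greedyTime f a b r k)) ≤ ε := by
    intro k
    by_cases hk : k < N
    · obtain ⟨w, hw, hwε⟩ := exists_dist_rightLim_le hf (greedyTime_mem_Ico hab (hN k hk))
        (greedyTime_lt_succ hab hr hf (hN k hk)) hε
      exact ⟨w, fun _ => ⟨hw, hwε⟩⟩
    · exact ⟨0, fun h => absurd h hk⟩
  choose w hw using hw
  refine ofReal_sum_dist_le_of_chain f (r := r) hl (by field_simp) hε.le
    (y := interleave (greedyTime f a b r) w) ?_ ?_ ?_ ?_
  · simpa [interleave, greedyNode, greedyTime_zero] using hε.le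
  · intro m hm
    obtain ⟨k, rfl | rfl⟩ := Nat.even_or_odd' m
    · simpa using (hw k (by omega)).1.1
    · simpa [show 2 * k + 1 + 1 = 2 * (k + 1) by ring] using (hw k (by omega)).1.2
  · intro m hm
    obtain ⟨k, rfl | rfl⟩ := Nat.even_or_odd' m
    · simpa using ⟨greedyTime_mono hab (Nat.zero_le k), greedyTime_le hab k⟩
    · have := (hw k (by omega)).1
      simpa using ⟨(greedyTime_mono hab (Nat.zero_le k)).trans this.1.le,
        this.2.le.trans (greedyTime_le hab _)⟩
  · intro m hm
    obtain ⟨k, rfl | rfl⟩ := Nat.even_or_odd' m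
    · simp only [interleave_two_mul, interleave_two_mul_add_one]
      rcases greedyPlateau_eq_or_le_dist (f := f) (a := a) (b := b) (r := r) k with
        h | ⟨h, hfar⟩
      exacts [Or.inl h, Or.inr ⟨hfar, h ▸ (hw k (by omega)).2⟩]
    · simp only [show 2 * k + 1 + 1 = 2 * (k + 1) by ring, interleave_two_mul,
        interleave_two_mul_add_one]
      rcases greedyNode_succ_eq_or_le_dist (f := f) (a := a) (b := b) (r := r) k with
        h | ⟨h, hfar⟩
      exacts [Or.inl h, Or.inr ⟨hfar, by simpa [h] using hε.le⟩]

theorem ofReal_sum_dist_greedy_le (hab : a ≤ b) (hr : 0 < r) (hf : Regulated f a b) {l : ℝ}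
    (hl : 1 < l) {N : ℕ} (hN : ∀ k < N, greedyTime f a b r k < b) :
    ENNReal.ofReal (∑ m ∈ Finset.range (2 * N),
      dist (interleave (greedyNode f a b r) (greedyPlateau f a b r) (m + 1))
        (interleave (greedyNode f a b r) (greedyPlateau f a b r) m)) ≤
      ENNReal.ofReal l * truncVar f a b ((l - 1) * r / l) := by
  have herr :
      Tendsto (fun ε : ℝ => ENNReal.ofReal (2 * l * ε * ↑(2 * N))) (𝓝[>] 0) (𝓝 0) := by
    simpa using (ENNReal.tendsto_ofReal ((continuous_const.mul continuous_id).mul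
      continuous_const |>.tendsto' 0 0 (by simp))).mono_left nhdsWithin_le_nhds
  refine ge_of_tendsto (x := 𝓝[>] (0 : ℝ)) (by simpa using tendsto_const_nhds.add herr) ?_
  filter_upwards [self_mem_nhdsWithin] with ε hε
  exact_mod_cast ofReal_sum_dist_greedy_le_add hab hr hf hl hN hε

theorem Regulated.exists_isStepOn_approx (hab : a ≤ b) (hr : 0 < r) (hf : Regulated f a b)
    {l : ℝ} (hl : 1 < l) :
    ∃ g : ℝ → E, IsStepOn g a b ∧ (∀ t ∈ Icc a b, dist (f t) (g t) ≤ r) ∧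
      truncVar g a b 0 ≤ ENNReal.ofReal l * truncVar f a b ((l - 1) * r / l) := by
  classical
  obtain ⟨N, hNb, hN⟩ :
      ∃ N, greedyTime f a b r N = b ∧ ∀ k < N, greedyTime f a b r k < b :=
    have hex := exists_greedyTime_eq hab hr hf
    ⟨Nat.find hex, Nat.find_spec hex, fun k hk =>
      (greedyTime_le hab k).lt_of_ne (Nat.find_min hex hk)⟩
  set T : Fin (N + 1) → ℝ := fun k => greedyTime f a b r k
  have hT : StrictMono T :=
    Fin.strictMono_iff_lt_succ.2 fun i => greedyTime_lt_succ hab hr hf (hN i i.2)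
  have hT0 : T 0 = a := by simp [T, greedyTime_zero]
  have hTN : T (Fin.last N) = b := hNb
  set u := interleave (greedyNode f a b r) (greedyPlateau f a b r)
  refine ⟨fun t => u (nodeIndex T t), hT0 ▸ hTN ▸ isStepOn_comp_nodeIndex hT u, ?_, ?_⟩
  · intro t ht
    rcases exists_eq_or_mem_Ioo (T := T) (by rwa [hT0, hTN]) with ⟨k, rfl⟩ | ⟨i, hi⟩
    · simp only [nodeIndex_apply hT, u, interleave_two_mul]
      exact dist_greedyNode_le hr.le k
    · simp only [nodeIndex_of_mem_Ioo hT hi, u, interleave_two_mul_add_one]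
      exact dist_le_of_lt_exitTime hi.1 hi.2
  · exact (truncVar_comp_le_sum_dist u nodeIndex_mono fun t ht =>
      nodeIndex_le (ht.2.trans_eq hTN.symm)).trans (ofReal_sum_dist_greedy_le hab hr hf hl hN)

end StepApproximation

theorem stmt_1 {E : Type*} [PseudoMetricSpace E] (a b c : ℝ) (hab : a < b) (hc : 0 < c)
    (f : ℝ → E) (hf : Regulated f a b) :
    (∀ l : ℝ, 1 < l → ∃ fc : ℝ → E, IsStepOn fc a b ∧
      (∀ t ∈ Set.Icc a b, dist (f t) (fc t) ≤ c / 2) ∧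
      truncVar fc a b 0 ≤ ENNReal.ofReal l * truncVar f a b ((l - 1) * c / (2 * l))) ∧
    truncVar f a b c ≤
      (⨅ (g : ℝ → E) (_ : ∀ t ∈ Set.Icc a b, dist (f t) (g t) ≤ c / 2), truncVar g a b 0) ∧
    (⨅ (g : ℝ → E) (_ : ∀ t ∈ Set.Icc a b, dist (f t) (g t) ≤ c / 2), truncVar g a b 0) ≤
      ⨅ (l : ℝ) (_ : 1 < l), ENNReal.ofReal l * truncVar f a b ((l - 1) * c / (2 * l)) := by
  have happrox : ∀ l : ℝ, 1 < l → ∃ fc : ℝ → E, IsStepOn fc a b ∧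
      (∀ t ∈ Set.Icc a b, dist (f t) (fc t) ≤ c / 2) ∧
      truncVar fc a b 0 ≤ ENNReal.ofReal l * truncVar f a b ((l - 1) * c / (2 * l)) := by
    intro l hl
    simpa only [show (l - 1) * (c / 2) / l = (l - 1) * c / (2 * l) by ring]
      using hf.exists_isStepOn_approx hab.le (half_pos hc) hl
  refine ⟨happrox, le_iInf₂ fun g hg => ?_, le_iInf₂ fun l hl => ?_⟩
  · have := truncVar_le_of_dist_le 0 hg
    rwa [zero_add, mul_div_cancel₀ c two_ne_zero] at this
  · obtain ⟨g, -, hg, hgl⟩ := happrox l hl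
    exact (iInf₂_le g hg).trans hgl
end

section
/- For any regulated function f : [a,b] → E into a metric space and c > 0, the infimum of total variations over all g within uniform distance c/2 of f satisfies TV(f,[a,b],c) ≤ inf_{g : ‖f−g‖_∞ ≤ c/2} TV(g,[a,b],0) ≤ 2 · TV(f,[a,b],c/4). -/
/-!
The lower bound is the triangle inequality: on every pair of points an increment of `g` is at
least the corresponding increment of `f` minus `c`.

For the upper bound, `g` is built greedily from the left. Starting at `x`, keep `g = f x` until
the first time `τ` at which `f` leaves the closed `c / 2`-ball around `f x`, then follow the right
limit of `f` at `τ` up to a point `T` where `f` is at distance `D > c / 2` from `f x`, and restart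
at `T`. This costs `g` at most `D + ε ≤ 2 (D - c / 4) + ε`, while the jump contributes
`D - c / 4 > c / 4` to the `c / 4`-truncated variation of `f`, so when the latter is finite the
construction stops after finitely many steps.
-/

open Set Filter Topology ENNReal

section TruncatedVariation

variable {E : Type*} [PseudoMetricSpace E]

noncomputable def truncSum (f : ℝ → E) (δ : ℝ) {n : ℕ} (t : Fin (n + 1) → ℝ) : ℝ :=
  ∑ i : Fin n, max (dist (f (t i.succ)) (f (t i.castSucc)) - δ) 0

lemma truncSum_nonneg (f : ℝ → E) (δ : ℝ) {n : ℕ} (t : Fin (n + 1) → ℝ) :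
    0 ≤ truncSum f δ t :=
  Finset.sum_nonneg fun _ _ => le_max_right _ _

lemma truncSum_vecCons (f : ℝ → E) (δ x : ℝ) {n : ℕ} (t : Fin (n + 1) → ℝ) :
    truncSum f δ (Matrix.vecCons x t) = max (dist (f (t 0)) (f x) - δ) 0 + truncSum f δ t := by
  simp [truncSum, Fin.sum_univ_succ]

lemma ofReal_truncSum_le_truncVar {f : ℝ → E} {a b δ : ℝ} {n : ℕ} {t : Fin (n + 1) → ℝ}
    (ht : StrictMono t) (hmem : ∀ i, t i ∈ Icc a b) :
    ENNReal.ofReal (truncSum f δ t) ≤ truncVar f a b δ :=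
  le_iSup₂_of_le n t (le_iSup₂_of_le (α := ℝ≥0∞) ht hmem le_rfl)

lemma truncVar_le_truncVar_of_dist_le {f g : ℝ → E} {a b δ r : ℝ}
    (h : ∀ t ∈ Icc a b, dist (f t) (g t) ≤ r) :
    truncVar f a b (δ + 2 * r) ≤ truncVar g a b δ := by
  refine iSup₂_le fun n t => iSup₂_le fun ht hmem => ?_
  refine le_trans (ENNReal.ofReal_le_ofReal ?_) (ofReal_truncSum_le_truncVar ht hmem)
  refine Finset.sum_le_sum fun i _ => max_le_max ?_ le_rfl
  have := dist_triangle4 (f (t i.succ)) (g (t i.succ)) (g (t i.castSucc)) (f (t i.castSucc))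
  linarith [h _ (hmem i.succ), h _ (hmem i.castSucc),
    dist_comm (g (t i.castSucc)) (f (t i.castSucc))]

lemma ofReal_add_truncVar_le {f : ℝ → E} {x y b δ : ℝ} (hxy : x < y) (hyb : y ≤ b) :
    ENNReal.ofReal (max (dist (f y) (f x) - δ) 0) + truncVar f y b δ ≤ truncVar f x b δ := by
  set p := max (dist (f y) (f x) - δ) 0
  have hp : 0 ≤ p := le_max_right _ _
  have key : ∀ (n : ℕ) (t : Fin (n + 1) → ℝ), StrictMono t → (∀ i, t i ∈ Icc y b) →
      ENNReal.ofReal p + ENNReal.ofReal (truncSum f δ t) ≤ truncVar f x b δ := by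
    intro n t ht hmem
    have hmem' : ∀ i, t i ∈ Icc x b := fun i => ⟨hxy.le.trans (hmem i).1, (hmem i).2⟩
    rw [← ENNReal.ofReal_add hp (truncSum_nonneg f δ t)]
    rcases (hmem 0).1.eq_or_lt with h0 | h0
    · refine (le_of_eq ?_).trans (ofReal_truncSum_le_truncVar (ht.vecCons (h0 ▸ hxy)) ?_)
      · rw [truncSum_vecCons, ← h0]
      · exact Fin.cases ⟨le_rfl, hxy.le.trans hyb⟩ hmem'
    · refine le_trans (ENNReal.ofReal_le_ofReal ?_)
        (ofReal_truncSum_le_truncVar ((ht.vecCons h0).vecCons hxy) ?_)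
      · rw [truncSum_vecCons, truncSum_vecCons]
        simp only [Matrix.cons_val_zero]
        linarith [le_max_right (dist (f (t 0)) (f y) - δ) 0]
      · exact Fin.cases ⟨le_rfl, hxy.le.trans hyb⟩ (Fin.cases ⟨hxy.le, hyb⟩ hmem')
  have hpx : ENNReal.ofReal p ≤ truncVar f x b δ := by
    simpa [truncSum] using key 0 ![y] strictMono_vecEmpty (Fin.forall_fin_one.2 ⟨le_rfl, hyb⟩)
  calc ENNReal.ofReal p + truncVar f y b δ
      ≤ ENNReal.ofReal p + (truncVar f x b δ - ENNReal.ofReal p) := by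
        gcongr
        exact iSup₂_le fun n t => iSup₂_le fun ht hmem =>
          ENNReal.le_sub_of_add_le_left ENNReal.ofReal_ne_top (key n t ht hmem)
    _ = truncVar f x b δ := add_tsub_cancel_of_le hpx

lemma truncVar_le_eVariationOn {f : ℝ → E} {a b δ : ℝ} (hδ : 0 ≤ δ) :
    truncVar f a b δ ≤ eVariationOn f (Icc a b) := by
  refine iSup₂_le fun n t => iSup₂_le fun ht hmem => ?_
  set u : ℕ → ℝ := fun i => t ⟨min i n, by omega⟩
  have hu : Monotone u := fun i j hij => ht.monotone (Fin.mk_le_mk.2 (min_le_min_right n hij))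
  calc ENNReal.ofReal (truncSum f δ t)
      ≤ ENNReal.ofReal (∑ i : Fin n, dist (f (t i.succ)) (f (t i.castSucc))) :=
        ENNReal.ofReal_le_ofReal <| Finset.sum_le_sum fun i _ =>
          max_le (by linarith) dist_nonneg
    _ = ∑ i ∈ Finset.range n, edist (f (u (i + 1))) (f (u i)) := by
        rw [ENNReal.ofReal_sum_of_nonneg fun _ _ => dist_nonneg, ← Fin.sum_univ_eq_sum_range]
        refine Finset.sum_congr rfl fun i _ => ?_
        rw [edist_dist]
        congr <;> simp [Fin.ext_iff, i.isLt.le, Nat.succ_le_of_lt i.isLt]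
    _ ≤ eVariationOn f (Icc a b) := eVariationOn.sum_le hu fun i => hmem _

end TruncatedVariation

section StepFunctions

variable {E : Type*} [PseudoEMetricSpace E]

lemma sum_edist_comp_le_sum_Ico (v : ℕ → E) {u : ℕ → ℕ} (hu : Monotone u) (n : ℕ) :
    ∑ i ∈ Finset.range n, edist (v (u (i + 1))) (v (u i)) ≤
      ∑ k ∈ Finset.Ico (u 0) (u n), edist (v k) (v (k + 1)) := by
  induction n with
  | zero => simp
  | succ n ih =>
    rw [Finset.sum_range_succ, ← Finset.sum_Ico_consecutive _ (hu n.zero_le) (hu n.le_succ),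
      edist_comm]
    exact add_le_add ih (edist_le_Ico_sum_edist v (hu n.le_succ))

lemma eVariationOn_Icc_nat_le (v : ℕ → E) (m M : ℕ) :
    eVariationOn v (Icc m M) ≤ ∑ k ∈ Finset.Ico m M, edist (v k) (v (k + 1)) :=
  iSup_le fun ⟨n, _, hu, hmem⟩ => (sum_edist_comp_le_sum_Ico v hu n).trans <|
    Finset.sum_le_sum_of_subset (Finset.Ico_subset_Ico (hmem 0).1 (hmem n).2)

lemma eVariationOn_Icc_le_of_const_on_Icc_Ioo {g : ℝ → E} {x τ T : ℝ} {p q : E}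
    (hp : ∀ t ∈ Icc x τ, g t = p) (hq : ∀ t ∈ Ioo τ T, g t = q) :
    eVariationOn g (Icc x T) ≤ edist p q + edist q (g T) := by
  set φ : ℝ → ℕ := fun t => if t ≤ τ then 0 else if t < T then 1 else 2
  set v : ℕ → E := fun k => if k = 0 then p else if k = 1 then q else g T
  have hφ : Monotone φ := by
    intro s t hst
    simp only [φ]
    split_ifs <;> first | omega | (push Not at *; linarith)
  have hφ2 : MapsTo φ (Icc x T) (Icc 0 2) := fun t _ => by
    simp only [φ, mem_Icc]
    split_ifs <;> norm_num
  have hg : EqOn g (v ∘ φ) (Icc x T) := by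
    intro t ⟨hxt, htT⟩
    rcases le_or_gt t τ with h1 | h1
    · simp [φ, v, h1, hp t ⟨hxt, h1⟩]
    rcases lt_or_ge t T with h2 | h2
    · simp [φ, v, h1.not_ge, h2, hq t ⟨h1, h2⟩]
    · obtain rfl := le_antisymm htT h2
      simp [φ, v, h1.not_ge]
  calc eVariationOn g (Icc x T) = eVariationOn (v ∘ φ) (Icc x T) := eVariationOn.eq_of_eqOn hg
    _ ≤ eVariationOn v (Icc 0 2) :=
        eVariationOn.comp_le_of_monotoneOn v φ (hφ.monotoneOn _) hφ2
    _ ≤ ∑ k ∈ Finset.Ico 0 2, edist (v k) (v (k + 1)) := eVariationOn_Icc_nat_le v 0 2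
    _ = edist p q + edist q (g T) := by simp [v, Finset.sum_range_succ]

end StepFunctions

section Approximation

variable {E : Type*} [PseudoMetricSpace E]

lemma exists_first_exit {f : ℝ → E} {x b r η : ℝ} (hr : 0 < r) (hη : 0 < η)
    (hf : ∀ t ∈ Ico x b, ∃ L, Tendsto f (𝓝[>] t) (𝓝 L))
    (hexit : ∃ s ∈ Ioc x b, r < dist (f s) (f x)) :
    ∃ τ T L, x ≤ τ ∧ τ < T ∧ T ≤ b ∧ r < dist (f T) (f x) ∧
      (∀ t ∈ Icc x τ, dist (f t) (f x) ≤ r) ∧ (∀ t ∈ Ioo τ T, dist (f t) L ≤ r) ∧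
      dist (f x) L + dist L (f T) ≤ dist (f T) (f x) + η := by
  set S := {t | t ∈ Ioc x b ∧ r < dist (f t) (f x)}
  obtain ⟨s, hs⟩ : S.Nonempty := hexit
  have hbdd : BddBelow S := ⟨x, fun t ht => ht.1.1.le⟩
  set τ := sInf S
  have hxτ : x ≤ τ := le_csInf ⟨s, hs⟩ fun t ht => ht.1.1.le
  have hτb : τ ≤ b := (csInf_le hbdd hs).trans hs.1.2
  have h_outside : ∀ t ∈ Icc x b, t ∉ S → dist (f t) (f x) ≤ r := by
    rintro t ⟨hxt, htb⟩ htS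
    rcases hxt.eq_or_lt with rfl | hxt
    · simpa using hr.le
    · exact not_lt.1 fun h => htS ⟨⟨hxt, htb⟩, h⟩
  have h_before : ∀ t ∈ Ico x τ, dist (f t) (f x) ≤ r := fun t ht =>
    h_outside t ⟨ht.1, ht.2.le.trans hτb⟩ (notMem_of_lt_csInf ht.2 hbdd)
  by_cases hτS : τ ∈ S
  · refine ⟨x, τ, f x, le_rfl, hτS.1.1, hτS.1.2, hτS.2, fun t ht => ?_,
      fun t ht => h_before t ⟨ht.1.le, ht.2⟩, by simp [dist_comm, hη.le]⟩
    exact h_before t ⟨ht.1, ht.2.trans_lt hτS.1.1⟩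
  · -- the exit time is not attained: use the right limit of `f` at `τ`
    have hτb' : τ < b := hτb.lt_of_ne fun h =>
      hτS (by convert hs using 1; exact le_antisymm (csInf_le hbdd hs) (hs.1.2.trans h.ge))
    obtain ⟨L, hL⟩ := hf τ ⟨hxτ, hτb'⟩
    obtain ⟨d, hd, hdL⟩ :=
      Metric.tendsto_nhdsWithin_nhds.1 hL (min r (η / 2)) (lt_min hr (half_pos hη))
    obtain ⟨T, hTS, hTd⟩ := exists_lt_of_csInf_lt ⟨s, hs⟩ (lt_add_of_pos_right τ hd)
    have hτT : τ < T := (csInf_le hbdd hTS).lt_of_ne fun h => hτS (by convert hTS)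
    have h_near : ∀ t ∈ Ioc τ T, dist (f t) L < min r (η / 2) := fun t ht =>
      hdL ht.1 (by rw [Real.dist_eq, abs_of_pos (sub_pos.2 ht.1)]; linarith [ht.2])
    refine ⟨τ, T, L, hxτ, hτT, hTS.1.2, hTS.2, fun t ht => ?_,
      fun t ht => (h_near t (Ioo_subset_Ioc_self ht)).le.trans (min_le_left _ _), ?_⟩
    · rcases ht.2.lt_or_eq with h | rfl
      · exact h_before t ⟨ht.1, h⟩
      · exact h_outside _ ⟨hxτ, hτb⟩ hτS
    · have hTL := (h_near T ⟨hτT, le_rfl⟩).trans_le (min_le_right _ _)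
      linarith [dist_triangle (f x) (f T) L, dist_comm (f x) (f T), dist_comm L (f T)]

lemma exists_concat {f g' : ℝ → E} {x τ T b r : ℝ} {L : E} (hxτ : x ≤ τ) (hτT : τ < T)
    (hTb : T ≤ b) (h_first : ∀ t ∈ Icc x τ, dist (f t) (f x) ≤ r)
    (h_second : ∀ t ∈ Ioo τ T, dist (f t) L ≤ r) (hg'T : g' T = f T)
    (hg'near : ∀ t ∈ Icc T b, dist (f t) (g' t) ≤ r) :
    ∃ g : ℝ → E, g x = f x ∧ (∀ t ∈ Icc x b, dist (f t) (g t) ≤ r) ∧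
      eVariationOn g (Icc x b) ≤ edist (f x) L + edist L (f T) + eVariationOn g' (Icc T b) := by
  set g : ℝ → E := fun t => if t < T then (if t ≤ τ then f x else L) else g' t
  refine ⟨g, by simp [g, hxτ.trans_lt hτT, hxτ], fun t ht => ?_, ?_⟩
  · rcases lt_or_ge t T with htT | hTt
    · by_cases htτ : t ≤ τ
      · simpa [g, htT, htτ] using h_first t ⟨ht.1, htτ⟩
      · simpa [g, htT, htτ] using h_second t ⟨not_le.1 htτ, htT⟩
    · simpa [g, hTt.not_gt] using hg'near t ⟨hTt, ht.2⟩
  have hsplit := eVariationOn.Icc_add_Icc g (hxτ.trans hτT.le) hTb (mem_univ T)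
  simp only [univ_inter] at hsplit
  rw [← hsplit, eVariationOn.eq_of_eqOn (f' := g') (s := Icc T b) fun t ht => by
    simp [g, ht.1.not_gt]]
  have hgT : g T = f T := by simp [g, hg'T]
  have hleft := eVariationOn_Icc_le_of_const_on_Icc_Ioo (g := g) (x := x) (τ := τ) (T := T)
    (p := f x) (q := L) (fun t ht => by simp [g, ht.2, ht.2.trans_lt hτT])
    (fun t ht => by simp [g, ht.2, ht.1.not_ge])
  exact add_le_add (hgT ▸ hleft) le_rfl

lemma lt_nat_mul_of_add_le {a q V V' : ℝ≥0∞} {n : ℕ} (hqa : q ≤ a) (hq : q ≠ ⊤)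
    (h : a + V' ≤ V) (hV : V < (n + 1 : ℕ) * q) : V' < n * q := by
  rw [← ENNReal.add_lt_add_iff_right hq]
  calc V' + q ≤ a + V' := by rw [add_comm]; exact add_le_add hqa le_rfl
    _ < (n + 1 : ℕ) * q := h.trans_lt hV
    _ = n * q + q := by push_cast; ring

-- A jump of size `D > c / 2` costs `g` at most `2 (D - c / 4)`.
lemma ofReal_add_le_two_mul_add_ofReal {c D d ε : ℝ} {V V' W : ℝ≥0∞} (hc : 0 ≤ c)
    (hD : c / 2 ≤ D) (hε : 0 < ε) (hd : d ≤ D + ε / 2)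
    (hV : ENNReal.ofReal (D - c / 4) + V' ≤ V) (hW : W ≤ 2 * V' + ENNReal.ofReal (ε / 2)) :
    ENNReal.ofReal d + W ≤ 2 * V + ENNReal.ofReal ε :=
  calc ENNReal.ofReal d + W
      ≤ 2 * ENNReal.ofReal (D - c / 4) + ENNReal.ofReal (ε / 2) +
        (2 * V' + ENNReal.ofReal (ε / 2)) := by
        gcongr
        rw [← ENNReal.ofReal_ofNat 2, ← ENNReal.ofReal_mul zero_le_two,
          ← ENNReal.ofReal_add (by linarith) (by linarith)]
        exact ENNReal.ofReal_le_ofReal (by linarith)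
    _ = 2 * (ENNReal.ofReal (D - c / 4) + V') + ENNReal.ofReal (ε / 2 + ε / 2) := by
        rw [ENNReal.ofReal_add (half_pos hε).le (half_pos hε).le]; ring
    _ ≤ 2 * V + ENNReal.ofReal ε := by rw [add_halves]; gcongr

lemma exists_dist_le_eVariationOn_le {f : ℝ → E} {b c : ℝ} (hc : 0 < c) (n : ℕ) {x ε : ℝ}
    (hf : ∀ t ∈ Ico x b, ∃ L, Tendsto f (𝓝[>] t) (𝓝 L))
    (hbudget : truncVar f x b (c / 4) < n * ENNReal.ofReal (c / 4)) (hε : 0 < ε) :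
    ∃ g : ℝ → E, g x = f x ∧ (∀ t ∈ Icc x b, dist (f t) (g t) ≤ c / 2) ∧
      eVariationOn g (Icc x b) ≤ 2 * truncVar f x b (c / 4) + ENNReal.ofReal ε := by
  induction n generalizing x ε with
  | zero => simp at hbudget
  | succ n ih =>
    by_cases hexit : ∃ s ∈ Ioc x b, c / 2 < dist (f s) (f x)
    swap
    · have hconst : eVariationOn (fun _ => f x) (Icc x b) = 0 := eVariationOn.constant_on
        (subsingleton_singleton.anti (image_subset_iff.2 fun _ _ => rfl))
      refine ⟨fun _ => f x, rfl, fun t ht => ?_, hconst.trans_le zero_le⟩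
      rcases ht.1.eq_or_lt with rfl | hxt
      · simpa using (half_pos hc).le
      · exact not_lt.1 fun h => hexit ⟨t, ⟨hxt, ht.2⟩, h⟩
    obtain ⟨τ, T, L, hxτ, hτT, hTb, hjump, h_first, h_second, h_glue⟩ :=
      exists_first_exit (half_pos hc) (half_pos hε) hf hexit
    set D := dist (f T) (f x)
    have hsplit :
        ENNReal.ofReal (D - c / 4) + truncVar f T b (c / 4) ≤ truncVar f x b (c / 4) := by
      simpa [max_eq_left (by linarith : 0 ≤ D - c / 4)] using
        ofReal_add_truncVar_le (f := f) (δ := c / 4) (hxτ.trans_lt hτT) hTb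
    -- the jump at `T` uses up more than `c / 4` of the budget
    have hbudget' : truncVar f T b (c / 4) < n * ENNReal.ofReal (c / 4) :=
      lt_nat_mul_of_add_le (ENNReal.ofReal_le_ofReal (by linarith)) ENNReal.ofReal_ne_top hsplit
        hbudget
    obtain ⟨g', hg'T, hg'near, hg'var⟩ := ih (x := T) (ε := ε / 2)
      (fun t ht => hf t ⟨(hxτ.trans hτT.le).trans ht.1, ht.2⟩) hbudget' (half_pos hε)
    obtain ⟨g, hgx, hgnear, hg_var⟩ :=
      exists_concat hxτ hτT hTb h_first h_second hg'T hg'near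
    refine ⟨g, hgx, hgnear, hg_var.trans ?_⟩
    rw [edist_dist, edist_dist, ← ENNReal.ofReal_add dist_nonneg dist_nonneg]
    exact ofReal_add_le_two_mul_add_ofReal hc.le hjump.le hε h_glue hsplit hg'var

end Approximation

theorem stmt_2_general {E : Type*} [PseudoMetricSpace E] (a b c : ℝ) (hc : 0 < c)
    (f : ℝ → E) (hf : Regulated f a b) :
    truncVar f a b c ≤
      (⨅ (g : ℝ → E) (_ : ∀ t ∈ Set.Icc a b, dist (f t) (g t) ≤ c / 2), truncVar g a b 0) ∧
    (⨅ (g : ℝ → E) (_ : ∀ t ∈ Set.Icc a b, dist (f t) (g t) ≤ c / 2), truncVar g a b 0) ≤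
      2 * truncVar f a b (c / 4) := by
  refine ⟨le_iInf₂ fun g hg => ?_, ?_⟩
  · have := truncVar_le_truncVar_of_dist_le (δ := 0) hg
    rwa [zero_add, mul_div_cancel₀ c two_ne_zero] at this
  obtain htop | hfin := eq_or_ne (truncVar f a b (c / 4)) ⊤
  · simp [htop]
  obtain ⟨n, hn⟩ :=
    ENNReal.exists_nat_mul_gt (ENNReal.ofReal_pos.2 (by linarith : 0 < c / 4)).ne' hfin
  refine ENNReal.le_of_forall_pos_le_add fun ε hε _ => ?_
  obtain ⟨g, -, hg, hvar⟩ := exists_dist_le_eVariationOn_le hc n hf.1 hn (NNReal.coe_pos.2 hε)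
  calc (⨅ (g : ℝ → E) (_ : ∀ t ∈ Icc a b, dist (f t) (g t) ≤ c / 2), truncVar g a b 0)
      ≤ truncVar g a b 0 := iInf₂_le g hg
    _ ≤ eVariationOn g (Icc a b) := truncVar_le_eVariationOn le_rfl
    _ ≤ 2 * truncVar f a b (c / 4) + ε := by simpa using hvar

theorem stmt_2 {E : Type*} [PseudoMetricSpace E] (a b c : ℝ) (hab : a < b) (hc : 0 < c)
    (f : ℝ → E) (hf : Regulated f a b) :
    truncVar f a b c ≤
      (⨅ (g : ℝ → E) (_ : ∀ t ∈ Set.Icc a b, dist (f t) (g t) ≤ c / 2), truncVar g a b 0) ∧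
    (⨅ (g : ℝ → E) (_ : ∀ t ∈ Set.Icc a b, dist (f t) (g t) ≤ c / 2), truncVar g a b 0) ≤
      2 * truncVar f a b (c / 4) :=
  stmt_2_general a b c hc f hf
end

section
/- Let f : [0,2] → ℝ² be defined by f(t) = (cos(2π⌊t⌋/3), sin(2π⌊t⌋/3)). Then the truncated variation TV(f,[0,2],√3) = 0, yet there is no sequence of functions fₙ : [0,2] → ℝ² with ‖f − fₙ‖_∞ ≤ √3/2 and TV(fₙ,[0,2],0) → 0. Hence inf_{g∈B(f,√3/2)} TV(g,[0,2],0) > TV(f,[0,2],√3). -/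
open Set Filter Topology ENNReal

noncomputable def kolesFun : ℝ → EuclideanSpace ℝ (Fin 2) := fun t =>
  WithLp.toLp 2 ![Real.cos (2 * Real.pi * (⌊t⌋ : ℝ) / 3), Real.sin (2 * Real.pi * (⌊t⌋ : ℝ) / 3)]

/-!
The values of `kolesFun` are the vertices of an equilateral triangle of side `√3` inscribed in the
unit circle, so no jump of `kolesFun` exceeds `√3` and its `√3`-truncated variation vanishes.
If `g` stays within `r = √3 / 2` of `kolesFun`, then `g 0`, `g 1`, `g 2` lie in closed balls of
radius `r` around three points at mutual distance `2 r`. These balls have no common point, and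
quantitatively the identity `3 ∑ ‖y - pᵢ‖² - ∑ ‖pᵢ - pⱼ‖² = ‖3 y - ∑ pᵢ‖²` forces
`dist (g 0) (g 1) + dist (g 1) (g 2) ≥ r / 3`, a lower bound on the variation of every such `g`.
-/

open Real

theorem sum_sq_dist_le_three_mul_sum_sq_dist {E : Type*} [NormedAddCommGroup E]
    [InnerProductSpace ℝ E] (p₀ p₁ p₂ y : E) :
    dist p₀ p₁ ^ 2 + dist p₁ p₂ ^ 2 + dist p₀ p₂ ^ 2 ≤
      3 * (dist y p₀ ^ 2 + dist y p₁ ^ 2 + dist y p₂ ^ 2) := by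
  have hgap : 3 * (‖y - p₀‖ ^ 2 + ‖y - p₁‖ ^ 2 + ‖y - p₂‖ ^ 2) -
      (‖p₀ - p₁‖ ^ 2 + ‖p₁ - p₂‖ ^ 2 + ‖p₀ - p₂‖ ^ 2) = ‖y - p₀ + (y - p₁) + (y - p₂)‖ ^ 2 := by
    simp only [← real_inner_self_eq_norm_sq, inner_add_left, inner_add_right, inner_sub_left,
      inner_sub_right, real_inner_comm]
    ring
  simp only [dist_eq_norm]
  linarith [sq_nonneg ‖y - p₀ + (y - p₁) + (y - p₂)‖]

theorem div_three_le_dist_add_dist_of_equilateral {E : Type*} [NormedAddCommGroup E]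
    [InnerProductSpace ℝ E] {r : ℝ} {p₀ p₁ p₂ x y z : E}
    (h₀₁ : dist p₀ p₁ = 2 * r) (h₁₂ : dist p₁ p₂ = 2 * r) (h₀₂ : dist p₀ p₂ = 2 * r)
    (hx : dist x p₀ ≤ r) (hy : dist y p₁ ≤ r) (hz : dist z p₂ ≤ r) :
    r / 3 ≤ dist x y + dist y z := by
  have hy₀ : dist y p₀ ≤ dist x y + r := by
    linarith [dist_triangle y x p₀, dist_comm x y]
  have hy₂ : dist y p₂ ≤ dist y z + r := by
    linarith [dist_triangle y z p₂]
  have hsum := sum_sq_dist_le_three_mul_sum_sq_dist p₀ p₁ p₂ y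
  rw [h₀₁, h₁₂, h₀₂] at hsum
  -- with `s = dist x y`, `t = dist y z`: `hsum` gives `(s + r)² + r² + (t + r)² ≥ 4 r²`,
  -- hence `(s + t + r)² ≥ 2 r² > (4 r / 3)²`
  have h0 := dist_nonneg (x := y) (y := p₀)
  have h1 := dist_nonneg (x := y) (y := p₁)
  have h2 := dist_nonneg (x := y) (y := p₂)
  nlinarith [dist_nonneg (x := x) (y := y), dist_nonneg (x := y) (y := z),
    pow_le_pow_left₀ h0 hy₀ 2, pow_le_pow_left₀ h1 hy 2, pow_le_pow_left₀ h2 hy₂ 2]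

theorem cos_two_pi_mul_int_div_three (k : ℤ) :
    cos (2 * π * k / 3) = if 3 ∣ k then 1 else -(1 / 2) := by
  obtain ⟨q, r, hr, rfl⟩ : ∃ q r : ℤ, (r = 0 ∨ r = 1 ∨ r = 2) ∧ k = r + q * 3 :=
    ⟨k / 3, k % 3, by omega, by omega⟩
  have : 2 * π * ((r + q * 3 : ℤ) : ℝ) / 3 = 2 * π * r / 3 + q * (2 * π) := by push_cast; ring
  rw [this, cos_add_int_mul_two_pi]
  rcases hr with rfl | rfl | rfl
  · norm_num
  · rw [if_neg (by omega), show 2 * π * ((1 : ℤ) : ℝ) / 3 = π - π / 3 by push_cast; ring,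
      cos_pi_sub, cos_pi_div_three]
  · rw [if_neg (by omega), show 2 * π * ((2 : ℤ) : ℝ) / 3 = π / 3 + π by push_cast; ring,
      cos_add_pi, cos_pi_div_three]

theorem dist_kolesFun_sq (s t : ℝ) :
    dist (kolesFun s) (kolesFun t) ^ 2 = 2 - 2 * cos (2 * π * (⌊s⌋ - ⌊t⌋ : ℤ) / 3) := by
  rw [EuclideanSpace.dist_eq, sq_sqrt (by positivity), Fin.sum_univ_two, Real.dist_eq,
    Real.dist_eq, sq_abs, sq_abs]
  simp only [kolesFun, PiLp.toLp_apply, Matrix.cons_val_zero, Matrix.cons_val_one]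
  have : 2 * π * ((⌊s⌋ - ⌊t⌋ : ℤ) : ℝ) / 3 = 2 * π * ⌊s⌋ / 3 - 2 * π * ⌊t⌋ / 3 := by
    push_cast; ring
  rw [this, cos_sub]
  nlinarith [sin_sq_add_cos_sq (2 * π * ⌊s⌋ / 3), sin_sq_add_cos_sq (2 * π * ⌊t⌋ / 3)]

theorem dist_kolesFun_le (s t : ℝ) : dist (kolesFun s) (kolesFun t) ≤ √3 := by
  refine le_sqrt_of_sq_le ?_
  rw [dist_kolesFun_sq, cos_two_pi_mul_int_div_three]
  split_ifs <;> norm_num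

theorem dist_kolesFun_eq {s t : ℝ} (h : ¬ 3 ∣ ⌊s⌋ - ⌊t⌋) :
    dist (kolesFun s) (kolesFun t) = √3 := by
  rw [← sqrt_sq dist_nonneg, dist_kolesFun_sq, cos_two_pi_mul_int_div_three, if_neg h]
  norm_num

theorem truncVar_eq_zero_of_dist_le {E : Type*} [PseudoMetricSpace E] {f : ℝ → E} {a b δ : ℝ}
    (h : ∀ s ∈ Icc a b, ∀ t ∈ Icc a b, dist (f s) (f t) ≤ δ) : truncVar f a b δ = 0 := by
  refine nonpos_iff_eq_zero.mp (iSup₂_le fun n t => iSup₂_le fun _ ht => ?_)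
  rw [nonpos_iff_eq_zero, ENNReal.ofReal_eq_zero]
  exact Finset.sum_nonpos fun i _ => max_le (sub_nonpos.mpr (h _ (ht _) _ (ht _))) le_rfl

theorem ofReal_dist_add_dist_le_truncVar {E : Type*} [PseudoMetricSpace E] (f : ℝ → E)
    {a b s₀ s₁ s₂ : ℝ} (ha : a ≤ s₀) (h₀₁ : s₀ < s₁) (h₁₂ : s₁ < s₂) (hb : s₂ ≤ b) :
    ENNReal.ofReal (dist (f s₀) (f s₁) + dist (f s₁) (f s₂)) ≤ truncVar f a b 0 := by
  have hmono : StrictMono ![s₀, s₁, s₂] := by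
    refine Fin.strictMono_iff_lt_succ.mpr fun i => ?_
    fin_cases i <;> simpa
  have hmem : ∀ i, ![s₀, s₁, s₂] i ∈ Icc a b := by
    intro i; fin_cases i <;> simp <;> constructor <;> linarith
  refine le_iSup₂_of_le 2 _ (le_iSup₂_of_le hmono hmem ?_)
  simp [Fin.sum_univ_two, dist_comm]

theorem ofReal_le_truncVar_of_dist_kolesFun_le {g : ℝ → EuclideanSpace ℝ (Fin 2)}
    (hg : ∀ t ∈ Icc (0 : ℝ) 2, dist (kolesFun t) (g t) ≤ √3 / 2) :
    ENNReal.ofReal (√3 / 6) ≤ truncVar g 0 2 0 := by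
  have hside : dist (kolesFun 0) (kolesFun 1) = 2 * (√3 / 2) ∧
      dist (kolesFun 1) (kolesFun 2) = 2 * (√3 / 2) ∧
      dist (kolesFun 0) (kolesFun 2) = 2 * (√3 / 2) := by
    refine ⟨?_, ?_, ?_⟩ <;> rw [dist_kolesFun_eq (by norm_num)] <;> ring
  have hnear : ∀ t ∈ Icc (0 : ℝ) 2, dist (g t) (kolesFun t) ≤ √3 / 2 := fun t ht => by
    rw [dist_comm]; exact hg t ht
  have hbound : √3 / 6 ≤ dist (g 0) (g 1) + dist (g 1) (g 2) := by
    have := div_three_le_dist_add_dist_of_equilateral hside.1 hside.2.1 hside.2.2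
      (hnear 0 (by norm_num)) (hnear 1 (by norm_num)) (hnear 2 (by norm_num))
    linarith
  exact (ENNReal.ofReal_le_ofReal hbound).trans
    (ofReal_dist_add_dist_le_truncVar g le_rfl zero_lt_one one_lt_two le_rfl)

theorem stmt_3 :
    truncVar kolesFun 0 2 (Real.sqrt 3) = 0 ∧
    ¬ (∃ F : ℕ → ℝ → EuclideanSpace ℝ (Fin 2),
        (∀ n, ∀ t ∈ Set.Icc (0 : ℝ) 2, dist (kolesFun t) (F n t) ≤ Real.sqrt 3 / 2) ∧
        Filter.Tendsto (fun n => truncVar (F n) 0 2 0) Filter.atTop (nhds 0)) ∧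
    truncVar kolesFun 0 2 (Real.sqrt 3) <
      ⨅ (g : ℝ → EuclideanSpace ℝ (Fin 2))
        (_ : ∀ t ∈ Set.Icc (0 : ℝ) 2, dist (kolesFun t) (g t) ≤ Real.sqrt 3 / 2),
        truncVar g 0 2 0 := by
  have htv : truncVar kolesFun 0 2 √3 = 0 :=
    truncVar_eq_zero_of_dist_le fun s _ t _ => dist_kolesFun_le s t
  have hpos : (0 : ℝ≥0∞) < ENNReal.ofReal (√3 / 6) := ENNReal.ofReal_pos.mpr (by positivity)
  refine ⟨htv, ?_, ?_⟩
  · rintro ⟨F, hF, hlim⟩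
    exact hpos.not_ge <| ge_of_tendsto' hlim fun n => ofReal_le_truncVar_of_dist_kolesFun_le (hF n)
  · rw [htv]
    exact hpos.trans_le (le_iInf₂ fun g hg => ofReal_le_truncVar_of_dist_kolesFun_le hg)
end

section
/- If f : [a,b] → W into a normed space has finite p-variation V^p(f,[a,b]) for some p ≥ 1, then for every δ > 0 the truncated variation satisfies TV(f,[a,b],δ) ≤ V^p(f,[a,b]) · δ^{1−p}. -/
open Set Filter Topology ENNReal

noncomputable def pVar {W : Type*} [NormedAddCommGroup W] (f : ℝ → W) (a b p : ℝ) : ℝ≥0∞ :=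
  ⨆ (n : ℕ) (t : Fin (n + 1) → ℝ) (_ : StrictMono t) (_ : ∀ i, t i ∈ Set.Icc a b),
    ENNReal.ofReal (∑ i : Fin n, ‖f (t i.succ) - f (t i.castSucc)‖ ^ p)

private lemma key_ineq (x δ p : ℝ) (hx : 0 ≤ x) (hδ : 0 < δ) (hp : 1 ≤ p) :
    max (x - δ) 0 ≤ δ ^ (1 - p) * x ^ p := by
  rcases le_or_gt x δ with h | h
  · rw [max_eq_right (by linarith)]
    positivity
  · rw [max_eq_left (by linarith)]
    have h1 : δ ^ (p - 1) ≤ x ^ (p - 1) :=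
      Real.rpow_le_rpow hδ.le h.le (by linarith)
    have h2 : δ ^ (p - 1) * (x - δ) ≤ x ^ p := by
      calc δ ^ (p - 1) * (x - δ) ≤ x ^ (p - 1) * (x - δ) := by
            apply mul_le_mul_of_nonneg_right h1 (by linarith)
        _ ≤ x ^ (p - 1) * x ^ (1 : ℝ) := by
            apply mul_le_mul_of_nonneg_left _ (Real.rpow_nonneg hx _)
            rw [Real.rpow_one]; linarith
        _ = x ^ p := by
            rw [← Real.rpow_add (by linarith)]; ring_nf
    have h3 : (0:ℝ) ≤ δ ^ (1 - p) := Real.rpow_nonneg hδ.le _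
    have h4 : δ ^ (1 - p) * δ ^ (p - 1) = 1 := by
      rw [← Real.rpow_add hδ]; norm_num
    calc x - δ = δ ^ (1 - p) * (δ ^ (p - 1) * (x - δ)) := by
          rw [← mul_assoc, h4, one_mul]
      _ ≤ δ ^ (1 - p) * x ^ p := mul_le_mul_of_nonneg_left h2 h3

theorem stmt_8 {W : Type*} [NormedAddCommGroup W] [NormedSpace ℝ W] (a b p δ : ℝ)
    (hp : 1 ≤ p) (hδ : 0 < δ) (f : ℝ → W) (hfin : pVar f a b p < ⊤) :
    truncVar f a b δ ≤ pVar f a b p * ENNReal.ofReal (δ ^ (1 - p)) := by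
  rw [truncVar]
  refine iSup_le fun n => iSup_le fun t => iSup_le fun ht => iSup_le fun htab => ?_
  have h1 : ∑ i : Fin n, max (dist (f (t i.succ)) (f (t i.castSucc)) - δ) 0
      ≤ δ ^ (1 - p) * ∑ i : Fin n, ‖f (t i.succ) - f (t i.castSucc)‖ ^ p := by
    rw [Finset.mul_sum]
    apply Finset.sum_le_sum
    intro i _
    rw [dist_eq_norm]
    exact key_ineq _ δ p (norm_nonneg _) hδ hp
  calc ENNReal.ofReal (∑ i : Fin n, max (dist (f (t i.succ)) (f (t i.castSucc)) - δ) 0)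
      ≤ ENNReal.ofReal (δ ^ (1 - p) * ∑ i : Fin n, ‖f (t i.succ) - f (t i.castSucc)‖ ^ p) :=
        ENNReal.ofReal_le_ofReal h1
    _ = ENNReal.ofReal (∑ i : Fin n, ‖f (t i.succ) - f (t i.castSucc)‖ ^ p)
        * ENNReal.ofReal (δ ^ (1 - p)) := by
        rw [ENNReal.ofReal_mul (Real.rpow_nonneg hδ.le _), mul_comm]
    _ ≤ pVar f a b p * ENNReal.ofReal (δ ^ (1 - p)) := by
        apply mul_le_mul_left
        rw [pVar]
        exact le_iSup_of_le n (le_iSup_of_le t (le_iSup_of_le ht (le_iSup_of_le htab le_rfl)))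
end

section
/- For f : [a,b] → W, p ≥ 1, and δ ≥ 0, one has TV(f,[a,b],δ) ≥ (osc(f,[a,b]) − δ)₊ where osc(f,[a,b]) = sup_{a≤s<t≤b} ‖f(t) − f(s)‖. Consequently ‖f‖_{p-TV,[a,b]} ≥ c_p^{1/p} · osc(f,[a,b]) with c_p = (p−1)^{p−1}/p^p, and ‖f(a)‖ + ‖f‖_{p-TV,[a,b]} ≥ c_p^{1/p} · sup_{t∈[a,b]} ‖f(t)‖. -/
/-! A two-point partition `s < t` shows `TV(f, δ) ≥ ‖f t - f s‖ - δ`. Hence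
`δ^(p-1) TV(f, δ) ≥ δ^(p-1) (D - δ)` with `D = ‖f t - f s‖`, and at the maximiser
`δ = (p-1) D / p` the right-hand side equals `c_p D^p`. The bound on `sup ‖f‖` then follows
from `‖f t‖ ≤ ‖f a‖ + ‖f t - f a‖` and `c_p ≤ 1`. -/

open Set Filter Topology ENNReal

noncomputable def pTVsup {W : Type*} [NormedAddCommGroup W] (f : ℝ → W) (a b p : ℝ) : ℝ≥0∞ :=
  ⨆ (δ : ℝ) (_ : 0 < δ), ENNReal.ofReal (δ ^ (p - 1)) * truncVar f a b δ

noncomputable def pTVnorm {W : Type*} [NormedAddCommGroup W] (f : ℝ → W) (a b p : ℝ) : ℝ≥0∞ :=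
  pTVsup f a b p ^ (1 / p)

lemma ofReal_dist_sub_le_truncVar {E : Type*} [PseudoMetricSpace E] (f : ℝ → E)
    {a b s t : ℝ} (δ : ℝ) (hs : a ≤ s) (hst : s < t) (ht : t ≤ b) :
    ENNReal.ofReal (dist (f t) (f s) - δ) ≤ truncVar f a b δ := by
  have hmono : StrictMono ![s, t] := by
    rw [Fin.strictMono_iff_lt_succ]
    intro i
    fin_cases i
    simpa using hst
  have hmem : ∀ i, ![s, t] i ∈ Icc a b := by
    intro i
    fin_cases i
    · exact ⟨hs, hst.le.trans ht⟩
    · exact ⟨hs.trans hst.le, ht⟩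
  refine le_trans ?_ (le_iSup_of_le 1 (le_iSup_of_le ![s, t]
    (le_iSup_of_le hmono (le_iSup_of_le hmem le_rfl))))
  exact ENNReal.ofReal_le_ofReal (by simp)

section pTV

variable {W : Type*} [NormedAddCommGroup W] (f : ℝ → W) {a b p s t : ℝ}

/-- The case `δ = 0` (the maximiser when `p = 1`) is reached as a limit of `δ > 0`, since
`δ ↦ δ^(p-1) (D - δ)` is continuous on `ℝ` for `p ≥ 1`. -/
lemma ofReal_rpow_mul_sub_le_pTVsup (hp : 1 ≤ p) (hs : a ≤ s) (hst : s < t) (ht : t ≤ b)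
    {δ : ℝ} (hδ : 0 ≤ δ) :
    ENNReal.ofReal (δ ^ (p - 1) * (‖f t - f s‖ - δ)) ≤ pTVsup f a b p := by
  set g : ℝ → ℝ≥0∞ := fun δ ↦ ENNReal.ofReal (δ ^ (p - 1) * (‖f t - f s‖ - δ))
  have hg : Continuous g :=
    ENNReal.continuous_ofReal.comp
      ((Real.continuous_rpow_const (by linarith)).mul (continuous_const.sub continuous_id))
  have hpos : Ioi 0 ⊆ g ⁻¹' Iic (pTVsup f a b p) := by
    intro δ (hδ : 0 < δ)
    calc g δ = ENNReal.ofReal (δ ^ (p - 1)) * ENNReal.ofReal (‖f t - f s‖ - δ) :=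
          ENNReal.ofReal_mul (by positivity)
      _ ≤ ENNReal.ofReal (δ ^ (p - 1)) * truncVar f a b δ := by
          gcongr
          simpa [dist_eq_norm] using ofReal_dist_sub_le_truncVar f δ hs hst ht
      _ ≤ pTVsup f a b p := le_iSup₂_of_le δ hδ le_rfl
  have := (isClosed_Iic.preimage hg).closure_subset_iff.mpr hpos
  rw [closure_Ioi] at this
  exact this hδ

lemma rpow_sub_one_mul_sub_at_maximiser {D : ℝ} (hp : 1 ≤ p) (hD : 0 ≤ D) :
    ((p - 1) / p * D) ^ (p - 1) * (D - (p - 1) / p * D) = (p - 1) ^ (p - 1) / p ^ p * D ^ p := by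
  have hp0 : 0 < p := by linarith
  have hpD : p ^ p = p ^ (p - 1) * p := by
    simpa using Real.rpow_add' hp0.le (y := p - 1) (z := 1) (by linarith)
  have hDp : D ^ p = D ^ (p - 1) * D := by
    simpa using Real.rpow_add' hD (y := p - 1) (z := 1) (by linarith)
  rw [Real.mul_rpow (div_nonneg (by linarith) hp0.le) hD, Real.div_rpow (by linarith) hp0.le,
    hpD, hDp]
  field_simp
  ring

lemma ofReal_mul_rpow_le_pTVsup (hp : 1 ≤ p) (hs : a ≤ s) (hst : s < t) (ht : t ≤ b) :
    ENNReal.ofReal ((p - 1) ^ (p - 1) / p ^ p * ‖f t - f s‖ ^ p) ≤ pTVsup f a b p := by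
  rw [← rpow_sub_one_mul_sub_at_maximiser hp (norm_nonneg _)]
  exact ofReal_rpow_mul_sub_le_pTVsup f hp hs hst ht
    (mul_nonneg (div_nonneg (by linarith) (by linarith)) (norm_nonneg _))

lemma rpow_mul_ofReal_norm_sub_le_pTVnorm (hp : 1 ≤ p) (hs : a ≤ s) (hst : s ≤ t) (ht : t ≤ b) :
    ENNReal.ofReal ((p - 1) ^ (p - 1) / p ^ p) ^ (1 / p) * ENNReal.ofReal ‖f t - f s‖ ≤
      pTVnorm f a b p := by
  rcases hst.eq_or_lt with rfl | hst
  · simp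
  have hp0 : 0 < p := by linarith
  have hc : 0 ≤ (p - 1) ^ (p - 1) / p ^ p := by
    have := Real.rpow_nonneg (sub_nonneg.mpr hp) (p - 1)
    positivity
  have hD := norm_nonneg (f t - f s)
  calc ENNReal.ofReal ((p - 1) ^ (p - 1) / p ^ p) ^ (1 / p) * ENNReal.ofReal ‖f t - f s‖
      = ENNReal.ofReal ((p - 1) ^ (p - 1) / p ^ p * ‖f t - f s‖ ^ p) ^ (1 / p) := by
        rw [ENNReal.ofReal_rpow_of_nonneg hc (by positivity),
          ENNReal.ofReal_rpow_of_nonneg (by positivity) (by positivity),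
          ← ENNReal.ofReal_mul (by positivity), Real.mul_rpow hc (by positivity),
          ← Real.rpow_mul hD, mul_one_div_cancel hp0.ne', Real.rpow_one]
    _ ≤ pTVnorm f a b p :=
        ENNReal.rpow_le_rpow (ofReal_mul_rpow_le_pTVsup f hp hs hst ht) (by positivity)

end pTV

lemma rpow_sub_one_div_rpow_le_one {p : ℝ} (hp : 1 ≤ p) : (p - 1) ^ (p - 1) / p ^ p ≤ 1 := by
  refine div_le_one_of_le₀ ?_ (by positivity)
  calc (p - 1) ^ (p - 1) ≤ p ^ (p - 1) := by gcongr; linarith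
    _ ≤ p ^ p := Real.rpow_le_rpow_of_exponent_le hp (by linarith)

theorem stmt_16_general {W : Type*} [NormedAddCommGroup W]
    (a b p δ : ℝ) (hp : 1 ≤ p) (f : ℝ → W) :
    (⨆ (s : ℝ) (t : ℝ) (_ : a ≤ s) (_ : s < t) (_ : t ≤ b),
        ENNReal.ofReal (‖f t - f s‖ - δ)) ≤ truncVar f a b δ ∧
    ENNReal.ofReal ((p - 1) ^ (p - 1) / p ^ p) ^ (1 / p) *
        (⨆ (s : ℝ) (t : ℝ) (_ : a ≤ s) (_ : s < t) (_ : t ≤ b),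
          ENNReal.ofReal ‖f t - f s‖) ≤ pTVnorm f a b p ∧
    ENNReal.ofReal ((p - 1) ^ (p - 1) / p ^ p) ^ (1 / p) *
        (⨆ (t : ℝ) (_ : t ∈ Set.Icc a b), ENNReal.ofReal ‖f t‖) ≤
      ENNReal.ofReal ‖f a‖ + pTVnorm f a b p := by
  set c := ENNReal.ofReal ((p - 1) ^ (p - 1) / p ^ p) ^ (1 / p)
  have hc : c ≤ 1 := ENNReal.rpow_le_one
    (ENNReal.ofReal_le_one.mpr (rpow_sub_one_div_rpow_le_one hp)) (by positivity)
  refine ⟨?_, ?_, ?_⟩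
  · refine iSup_le fun s ↦ iSup_le fun t ↦ iSup_le fun hs ↦ iSup_le fun hst ↦ iSup_le fun ht ↦ ?_
    simpa [dist_eq_norm] using ofReal_dist_sub_le_truncVar f δ hs hst ht
  · simp_rw [ENNReal.mul_iSup]
    exact iSup_le fun s ↦ iSup_le fun t ↦ iSup_le fun hs ↦ iSup_le fun hst ↦ iSup_le fun ht ↦
      rpow_mul_ofReal_norm_sub_le_pTVnorm f hp hs hst.le ht
  · simp_rw [ENNReal.mul_iSup]
    refine iSup₂_le fun t ht ↦ ?_
    calc c * ENNReal.ofReal ‖f t‖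
        ≤ c * ENNReal.ofReal ‖f a‖ + c * ENNReal.ofReal ‖f t - f a‖ := by
          rw [← mul_add, ← ENNReal.ofReal_add (norm_nonneg _) (norm_nonneg _)]
          gcongr
          exact norm_le_insert' (f t) (f a)
      _ ≤ ENNReal.ofReal ‖f a‖ + pTVnorm f a b p := by
          gcongr
          · exact mul_le_of_le_one_left zero_le hc
          · exact rpow_mul_ofReal_norm_sub_le_pTVnorm f hp le_rfl ht.1 ht.2

theorem stmt_16 {W : Type*} [NormedAddCommGroup W] [NormedSpace ℝ W]
    (a b p δ : ℝ) (hab : a < b) (hp : 1 ≤ p) (hδ : 0 ≤ δ) (f : ℝ → W) :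
    (⨆ (s : ℝ) (t : ℝ) (_ : a ≤ s) (_ : s < t) (_ : t ≤ b),
        ENNReal.ofReal (‖f t - f s‖ - δ)) ≤ truncVar f a b δ ∧
    ENNReal.ofReal ((p - 1) ^ (p - 1) / p ^ p) ^ (1 / p) *
        (⨆ (s : ℝ) (t : ℝ) (_ : a ≤ s) (_ : s < t) (_ : t ≤ b),
          ENNReal.ofReal ‖f t - f s‖) ≤ pTVnorm f a b p ∧
    ENNReal.ofReal ((p - 1) ^ (p - 1) / p ^ p) ^ (1 / p) *
        (⨆ (t : ℝ) (_ : t ∈ Set.Icc a b), ENNReal.ofReal ‖f t‖) ≤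
      ENNReal.ofReal ‖f a‖ + pTVnorm f a b p :=
  stmt_16_general a b p δ hp f
end

section
/- The seminorm ‖·‖_{p-TV} is subadditive over intervals: for p ≥ 1, f : [a,b] → W, and d ∈ (a,b), ‖f‖_{p-TV,[a,b]} ≤ ‖f‖_{p-TV,[a,d]} + ‖f‖_{p-TV,[d,b]}. -/
open Set Filter Topology ENNReal

open Finset
lemma max_sub_mono {x δ δ' : ℝ} (h : δ' ≤ δ) : max (x - δ) 0 ≤ max (x - δ') 0 :=
  max_le_max (by linarith) le_rfl

lemma max_sub_cross {x y z δ₁ δ₂ : ℝ} (h : x ≤ y + z) :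
    max (x - (δ₁ + δ₂)) 0 ≤ max (y - δ₂) 0 + max (z - δ₁) 0 := by
  apply max_le
  · calc x - (δ₁ + δ₂) ≤ (y - δ₂) + (z - δ₁) := by linarith
      _ ≤ _ := add_le_add (le_max_left _ _) (le_max_left _ _)
  · positivity

lemma ofReal_sum_le_truncVar_s17 {E : Type*} [PseudoMetricSpace E] (f : ℝ → E) (a b δ : ℝ) {m : ℕ}
    (u : Fin (m + 1) → ℝ) (hu : StrictMono u) (hmem : ∀ j, u j ∈ Set.Icc a b) :
    ENNReal.ofReal (∑ j : Fin m, max (dist (f (u j.succ)) (f (u j.castSucc)) - δ) 0)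
      ≤ truncVar f a b δ :=
  le_iSup_of_le m (le_iSup_of_le u (le_iSup_of_le hu (le_iSup_of_le hmem le_rfl)))

set_option maxHeartbeats 1000000 in
lemma truncVar_split {E : Type*} [PseudoMetricSpace E] (f : ℝ → E) {a b d : ℝ}
    (had : a ≤ d) (hdb : d ≤ b) {δ₁ δ₂ : ℝ} (h1 : 0 ≤ δ₁) (h2 : 0 ≤ δ₂) :
    truncVar f a b (δ₁ + δ₂) ≤ truncVar f a d δ₁ + truncVar f d b δ₂ := by
  refine iSup_le fun n => iSup_le fun t => iSup_le fun ht => iSup_le fun htm => ?_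
  set δ : ℝ := δ₁ + δ₂ with hδ
  set T : ℕ → ℝ := fun i => t ⟨min i n, Nat.lt_succ_of_le (min_le_right i n)⟩ with hT
  have hTeq : ∀ {i : ℕ} (h : i ≤ n), T i = t ⟨i, Nat.lt_succ_of_le h⟩ := by
    intro i h
    show t _ = t _
    exact congrArg t (Fin.ext (min_eq_left h))
  have hTlt : ∀ {i j : ℕ}, i < j → j ≤ n → T i < T j := by
    intro i j hij hj
    rw [hTeq (by omega), hTeq hj]
    exact ht (by simpa [Fin.lt_def] using hij)
  have hTle : ∀ {i j : ℕ}, i ≤ j → j ≤ n → T i ≤ T j := by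
    intro i j hij hj
    rcases eq_or_lt_of_le hij with rfl | h
    · exact le_rfl
    · exact (hTlt h hj).le
  have hTmem : ∀ i : ℕ, T i ∈ Set.Icc a b := fun i => htm _
  -- the goal sum as a range sum
  set G : ℕ → ℝ := fun i => max (dist (f (T (i + 1))) (f (T i)) - δ) 0 with hG
  have hGsum : (∑ i : Fin n, max (dist (f (t i.succ)) (f (t i.castSucc)) - δ) 0)
      = ∑ i ∈ range n, G i := by
    rw [← Fin.sum_univ_eq_sum_range G n]
    refine Finset.sum_congr rfl fun i _ => ?_
    simp only [hG]
    rw [hTeq (by omega : (i : ℕ) + 1 ≤ n), hTeq (by omega : (i : ℕ) ≤ n)]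
    congr 2 <;> exact congrArg t (Fin.ext rfl)
  rw [hGsum]
  set G₁ : ℕ → ℝ := fun i => max (dist (f (T (i + 1))) (f (T i)) - δ₁) 0 with hG₁
  set G₂ : ℕ → ℝ := fun i => max (dist (f (T (i + 1))) (f (T i)) - δ₂) 0 with hG₂
  have hGG₁ : ∀ i, G i ≤ G₁ i := fun i => max_sub_mono (by linarith)
  have hGG₂ : ∀ i, G i ≤ G₂ i := fun i => max_sub_mono (by linarith)
  by_cases hcase : ∃ i₀ : Fin (n + 1), t i₀ = d
  · -- d is a partition point
    obtain ⟨i₀, hi₀⟩ := hcase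
    set m : ℕ := (i₀ : ℕ) with hm
    have hmn : m ≤ n := by omega
    have hTm : T m = d := by rw [hTeq hmn, ← hi₀]
    -- left partition
    have hL : ENNReal.ofReal (∑ j ∈ range m, G₁ j) ≤ truncVar f a d δ₁ := by
      have := ofReal_sum_le_truncVar_s17 f a d δ₁ (m := m) (fun j => T (j : ℕ))
        (fun j₁ j₂ h => hTlt h (by omega))
        (fun j => ⟨(hTmem _).1, by
          have : T (j : ℕ) ≤ T m := hTle (by omega) hmn
          rw [hTm] at this; exact this⟩)
      refine le_trans (le_of_eq ?_) this
      congr 1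
      rw [← Fin.sum_univ_eq_sum_range G₁ m]
      exact Finset.sum_congr rfl fun j _ => by simp only [hG₁, Fin.val_succ, Fin.coe_castSucc]
    have hR : ENNReal.ofReal (∑ j ∈ range (n - m), G₂ (m + j)) ≤ truncVar f d b δ₂ := by
      have := ofReal_sum_le_truncVar_s17 f d b δ₂ (m := n - m) (fun j => T (m + (j : ℕ)))
        (fun j₁ j₂ h => hTlt (by omega) (by omega))
        (fun j => ⟨by
          have : T m ≤ T (m + (j : ℕ)) := hTle (by omega) (by omega)
          rw [hTm] at this; exact this, (hTmem _).2⟩)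
      refine le_trans (le_of_eq ?_) this
      congr 1
      rw [← Fin.sum_univ_eq_sum_range (fun j => G₂ (m + j)) (n - m)]
      exact Finset.sum_congr rfl fun j _ => by
        simp only [hG₂, Fin.val_succ, Fin.coe_castSucc, ← Nat.add_assoc]
    calc ENNReal.ofReal (∑ i ∈ range n, G i)
        ≤ ENNReal.ofReal ((∑ j ∈ range m, G₁ j) + ∑ j ∈ range (n - m), G₂ (m + j)) := by
          apply ENNReal.ofReal_le_ofReal
          rw [← Finset.sum_range_add_sum_Ico G hmn, Finset.sum_Ico_eq_sum_range G m n]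
          exact add_le_add (Finset.sum_le_sum fun i _ => hGG₁ i)
            (Finset.sum_le_sum fun i _ => hGG₂ _)
      _ ≤ ENNReal.ofReal (∑ j ∈ range m, G₁ j)
            + ENNReal.ofReal (∑ j ∈ range (n - m), G₂ (m + j)) := ENNReal.ofReal_add_le
      _ ≤ _ := add_le_add hL hR
  · -- d is not a partition point
    push_neg at hcase
    set k : ℕ := (Finset.univ.filter fun i : Fin (n + 1) => t i < d).card with hk
    have hkn : k ≤ n + 1 := le_trans (Finset.card_filter_le _ _) (by simp)
    have hkiff : ∀ i : Fin (n + 1), (i : ℕ) < k ↔ t i < d := by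
      intro i
      constructor
      · intro h
        by_contra hni
        have hsub : (Finset.univ.filter fun j : Fin (n + 1) => t j < d) ⊆ Finset.Iio i := by
          intro j hj
          simp only [Finset.mem_filter] at hj
          rw [Finset.mem_Iio]
          by_contra hij
          exact hni (lt_of_le_of_lt (ht.monotone (not_lt.mp hij)) hj.2)
        have hcard := Finset.card_le_card hsub
        rw [Fin.card_Iio] at hcard
        omega
      · intro hlt
        have hsub : Finset.Iic i ⊆ (Finset.univ.filter fun j : Fin (n + 1) => t j < d) := by
          intro j hj
          rw [Finset.mem_Iic] at hj
          simp only [Finset.mem_filter, Finset.mem_univ, true_and]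
          exact lt_of_le_of_lt (ht.monotone hj) hlt
        have hcard := Finset.card_le_card hsub
        rw [Fin.card_Iic] at hcard
        omega
    have hlt' : ∀ i : ℕ, i < k → T i < d := by
      intro i h
      rw [hTeq (by omega)]
      exact (hkiff ⟨i, by omega⟩).1 h
    have hgt' : ∀ i : ℕ, k ≤ i → i ≤ n → d < T i := by
      intro i hki hin
      rw [hTeq hin]
      have h1 : ¬ t ⟨i, Nat.lt_succ_of_le hin⟩ < d := fun hc => by
        have := (hkiff ⟨i, Nat.lt_succ_of_le hin⟩).2 hc
        simp only at this
        omega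
      exact lt_of_le_of_ne (not_lt.mp h1) (Ne.symm (hcase _))
    rcases Nat.eq_zero_or_pos k with hk0 | hkpos
    · -- k = 0 : all points above d
      set V : ℕ → ℝ := fun j => if j = 0 then d else T (j - 1) with hV
      have hVmono : StrictMono (fun j : Fin (n + 2) => V (j : ℕ)) := by
        intro j₁ j₂ h
        have h12 : (j₁ : ℕ) < (j₂ : ℕ) := h
        have hb2 : (j₂ : ℕ) < n + 2 := j₂.isLt
        simp only [hV]
        rcases Nat.eq_zero_or_pos (j₁ : ℕ) with h0 | hp1
        · rw [h0, if_pos rfl, if_neg (by omega)]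
          exact hgt' _ (by omega) (by omega)
        · rw [if_neg (by omega), if_neg (by omega)]
          exact hTlt (by omega) (by omega)
      have hVmem : ∀ j : Fin (n + 2), V (j : ℕ) ∈ Set.Icc d b := by
        intro j
        have hb : (j : ℕ) < n + 2 := j.isLt
        simp only [hV]
        by_cases h0 : (j : ℕ) = 0
        · rw [if_pos h0]; exact ⟨le_rfl, hdb⟩
        · rw [if_neg h0]
          exact ⟨(hgt' _ (by omega) (by omega)).le, (hTmem _).2⟩
      have hR := ofReal_sum_le_truncVar_s17 f d b δ₂ (m := n + 1) (fun j => V (j : ℕ)) hVmono hVmem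
      have hconv : (∑ j : Fin (n + 1), max (dist (f (V ((j.succ : Fin (n + 2)) : ℕ)))
            (f (V ((j.castSucc : Fin (n + 2)) : ℕ))) - δ₂) 0)
          = ∑ j ∈ range (n + 1), max (dist (f (V (j + 1))) (f (V j)) - δ₂) 0 := by
        rw [← Fin.sum_univ_eq_sum_range (fun j => max (dist (f (V (j + 1))) (f (V j)) - δ₂) 0)
          (n + 1)]
        exact Finset.sum_congr rfl fun j _ => by simp only [Fin.val_succ, Fin.coe_castSucc]
      rw [hconv] at hR
      have hsplit : ∑ j ∈ range (n + 1), max (dist (f (V (j + 1))) (f (V j)) - δ₂) 0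
          = (∑ j ∈ range n, max (dist (f (V (j + 2))) (f (V (j + 1))) - δ₂) 0)
            + max (dist (f (V 1)) (f (V 0)) - δ₂) 0 :=
        Finset.sum_range_succ' _ n
      have hterm : ∀ j, max (dist (f (V (j + 2))) (f (V (j + 1))) - δ₂) 0 = G₂ j := by
        intro j
        have e1 : V (j + 2) = T (j + 1) := by
          rw [hV]; simp only [if_neg (Nat.succ_ne_zero (j + 1))]; congr 1 <;> omega
        have e2 : V (j + 1) = T j := by
          rw [hV]; simp only [if_neg (Nat.succ_ne_zero j)]; congr 1 <;> omega
        rw [e1, e2, hG₂]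
      have hle : ∑ i ∈ range n, G i ≤ ∑ j ∈ range (n + 1),
          max (dist (f (V (j + 1))) (f (V j)) - δ₂) 0 := by
        rw [hsplit]
        have : ∑ i ∈ range n, G i ≤ ∑ j ∈ range n,
            max (dist (f (V (j + 2))) (f (V (j + 1))) - δ₂) 0 := by
          refine Finset.sum_le_sum fun i _ => ?_
          rw [hterm i]
          exact hGG₂ i
        have hnn : (0 : ℝ) ≤ max (dist (f (V 1)) (f (V 0)) - δ₂) 0 := le_max_right _ _
        linarith
      calc ENNReal.ofReal (∑ i ∈ range n, G i) ≤ truncVar f d b δ₂ :=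
            le_trans (ENNReal.ofReal_le_ofReal hle) hR
        _ ≤ _ := self_le_add_left _ _
    · -- k ≥ 1
      set k' : ℕ := k - 1 with hk'
      have hkk : k = k' + 1 := by omega
      set U : ℕ → ℝ := fun j => if j < k then T j else d with hU
      rcases Nat.lt_or_ge n (k) with hktop | hkn'
      · -- k = n + 1 : all points below d
        have hkeq : k = n + 1 := by omega
        have hUmono : StrictMono (fun j : Fin (n + 2) => U (j : ℕ)) := by
          intro j₁ j₂ h
          have h12 : (j₁ : ℕ) < (j₂ : ℕ) := h
          have hb2 : (j₂ : ℕ) < n + 2 := j₂.isLt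
          simp only [hU]
          rcases Nat.lt_or_ge (j₂ : ℕ) k with h2 | h2
          · have c1 : (j₁ : ℕ) < k := by omega
            rw [if_pos c1, if_pos h2]
            exact hTlt h12 (by omega)
          · have c1 : (j₁ : ℕ) < k := by omega
            have c2 : ¬ ((j₂ : ℕ) < k) := by omega
            rw [if_pos c1, if_neg c2]
            exact hlt' _ c1
        have hUmem : ∀ j : Fin (n + 2), U (j : ℕ) ∈ Set.Icc a d := by
          intro j
          have hb : (j : ℕ) < n + 2 := j.isLt
          simp only [hU]
          by_cases h0 : (j : ℕ) < k
          · rw [if_pos h0]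
            exact ⟨(hTmem _).1, (hlt' _ h0).le⟩
          · rw [if_neg h0]; exact ⟨had, le_rfl⟩
        have hL := ofReal_sum_le_truncVar_s17 f a d δ₁ (m := n + 1) (fun j => U (j : ℕ)) hUmono hUmem
        have hconv : (∑ j : Fin (n + 1), max (dist (f (U ((j.succ : Fin (n + 2)) : ℕ)))
              (f (U ((j.castSucc : Fin (n + 2)) : ℕ))) - δ₁) 0)
            = ∑ j ∈ range (n + 1), max (dist (f (U (j + 1))) (f (U j)) - δ₁) 0 := by
          rw [← Fin.sum_univ_eq_sum_range (fun j => max (dist (f (U (j + 1))) (f (U j)) - δ₁) 0)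
            (n + 1)]
          exact Finset.sum_congr rfl fun j _ => by simp only [Fin.val_succ, Fin.coe_castSucc]
        rw [hconv] at hL
        have hle : ∑ i ∈ range n, G i ≤ ∑ j ∈ range (n + 1),
            max (dist (f (U (j + 1))) (f (U j)) - δ₁) 0 := by
          rw [Finset.sum_range_succ]
          have h1 : ∑ i ∈ range n, G i ≤ ∑ j ∈ range n,
              max (dist (f (U (j + 1))) (f (U j)) - δ₁) 0 := by
            refine Finset.sum_le_sum fun i hi => ?_
            rw [Finset.mem_range] at hi
            have e1 : U (i + 1) = T (i + 1) := if_pos (by omega)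
            have e2 : U i = T i := if_pos (by omega)
            rw [e1, e2]
            exact hGG₁ i
          have hnn : (0 : ℝ) ≤ max (dist (f (U (n + 1))) (f (U n)) - δ₁) 0 := le_max_right _ _
          linarith
        calc ENNReal.ofReal (∑ i ∈ range n, G i) ≤ truncVar f a d δ₁ :=
              le_trans (ENNReal.ofReal_le_ofReal hle) hL
          _ ≤ _ := le_self_add
      · -- middle case : 1 ≤ k ≤ n
        set V : ℕ → ℝ := fun j => if j = 0 then d else T (k + j - 1) with hV
        have hUmono : StrictMono (fun j : Fin (k + 1) => U (j : ℕ)) := by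
          intro j₁ j₂ h
          have h12 : (j₁ : ℕ) < (j₂ : ℕ) := h
          have hb2 : (j₂ : ℕ) < k + 1 := j₂.isLt
          simp only [hU]
          rcases Nat.lt_or_ge (j₂ : ℕ) k with h2 | h2
          · have c1 : (j₁ : ℕ) < k := by omega
            rw [if_pos c1, if_pos h2]
            exact hTlt h12 (by omega)
          · have c1 : (j₁ : ℕ) < k := by omega
            have c2 : ¬ ((j₂ : ℕ) < k) := by omega
            rw [if_pos c1, if_neg c2]
            exact hlt' _ c1
        have hUmem : ∀ j : Fin (k + 1), U (j : ℕ) ∈ Set.Icc a d := by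
          intro j
          simp only [hU]
          by_cases h0 : (j : ℕ) < k
          · rw [if_pos h0]
            exact ⟨(hTmem _).1, (hlt' _ h0).le⟩
          · rw [if_neg h0]; exact ⟨had, le_rfl⟩
        have hVmono : StrictMono (fun j : Fin (n + 1 - k + 1) => V (j : ℕ)) := by
          intro j₁ j₂ h
          have h12 : (j₁ : ℕ) < (j₂ : ℕ) := h
          have hb2 : (j₂ : ℕ) < n + 1 - k + 1 := j₂.isLt
          have hj2 : (j₂ : ℕ) ≤ n + 1 - k := by omega
          simp only [hV]
          rcases Nat.eq_zero_or_pos (j₁ : ℕ) with h0 | hp1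
          · rw [h0, if_pos rfl, if_neg (by omega)]
            exact hgt' _ (by omega) (by omega)
          · rw [if_neg (by omega), if_neg (by omega)]
            exact hTlt (by omega) (by omega)
        have hVmem : ∀ j : Fin (n + 1 - k + 1), V (j : ℕ) ∈ Set.Icc d b := by
          intro j
          have hb2 : (j : ℕ) < n + 1 - k + 1 := j.isLt
          have hj2 : (j : ℕ) ≤ n + 1 - k := by omega
          simp only [hV]
          by_cases h0 : (j : ℕ) = 0
          · rw [if_pos h0]; exact ⟨le_rfl, hdb⟩
          · rw [if_neg h0]
            exact ⟨(hgt' _ (by omega) (by omega)).le, (hTmem _).2⟩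
        have hL := ofReal_sum_le_truncVar_s17 f a d δ₁ (m := k) (fun j => U (j : ℕ)) hUmono hUmem
        have hR := ofReal_sum_le_truncVar_s17 f d b δ₂ (m := n + 1 - k) (fun j => V (j : ℕ))
          hVmono hVmem
        have hconvL : (∑ j : Fin k, max (dist (f (U ((j.succ : Fin (k + 1)) : ℕ)))
              (f (U ((j.castSucc : Fin (k + 1)) : ℕ))) - δ₁) 0)
            = ∑ j ∈ range k, max (dist (f (U (j + 1))) (f (U j)) - δ₁) 0 := by
          rw [← Fin.sum_univ_eq_sum_range (fun j => max (dist (f (U (j + 1))) (f (U j)) - δ₁) 0) k]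
          exact Finset.sum_congr rfl fun j _ => by simp only [Fin.val_succ, Fin.coe_castSucc]
        have hconvR : (∑ j : Fin (n + 1 - k), max (dist (f (V ((j.succ : Fin (n + 1 - k + 1)) : ℕ)))
              (f (V ((j.castSucc : Fin (n + 1 - k + 1)) : ℕ))) - δ₂) 0)
            = ∑ j ∈ range (n + 1 - k), max (dist (f (V (j + 1))) (f (V j)) - δ₂) 0 := by
          rw [← Fin.sum_univ_eq_sum_range
            (fun j => max (dist (f (V (j + 1))) (f (V j)) - δ₂) 0) (n + 1 - k)]
          exact Finset.sum_congr rfl fun j _ => by simp only [Fin.val_succ, Fin.coe_castSucc]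
        rw [hconvL] at hL
        rw [hconvR] at hR
        set SU : ℝ := ∑ j ∈ range k, max (dist (f (U (j + 1))) (f (U j)) - δ₁) 0 with hSU
        set SV : ℝ := ∑ j ∈ range (n + 1 - k), max (dist (f (V (j + 1))) (f (V j)) - δ₂) 0
          with hSV
        have hkey : ∑ i ∈ range n, G i ≤ SU + SV := by
          -- decompose SU
          have eSU : SU = (∑ j ∈ range k', G₁ j) + max (dist (f d) (f (T k')) - δ₁) 0 := by
            rw [hSU, hkk, Finset.sum_range_succ]
            congr 1
            · refine Finset.sum_congr rfl fun j hj => ?_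
              rw [Finset.mem_range] at hj
              have e1 : U (j + 1) = T (j + 1) := if_pos (by omega)
              have e2 : U j = T j := if_pos (by omega)
              rw [e1, e2]
            · have e1 : U (k' + 1) = d := if_neg (by omega)
              have e2 : U k' = T k' := if_pos (by omega)
              rw [e1, e2]
          have hm2 : n + 1 - k = (n - k) + 1 := by omega
          have eSV : SV = (∑ j ∈ range (n - k), G₂ (k + j)) + max (dist (f (T k)) (f d) - δ₂) 0 := by
            rw [hSV, hm2, Finset.sum_range_succ' (fun j => max (dist (f (V (j + 1))) (f (V j)) - δ₂) 0) (n - k)]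
            have ei1 : ∀ j : ℕ, k + (j + 1 + 1) - 1 = k + j + 1 := fun j => by omega
            have ei2 : ∀ j : ℕ, k + (j + 1) - 1 = k + j := fun j => by omega
            have ei3 : k + 1 - 1 = k := by omega
            simp only [hV, hG₂, if_neg (Nat.succ_ne_zero _), if_neg one_ne_zero, if_pos rfl,
              Nat.zero_add, Nat.add_zero, ei1, ei2, ei3]
          -- decompose LHS
          have eL : ∑ i ∈ range n, G i
              = (∑ i ∈ range k', G i) + ((∑ j ∈ range (n - k), G (k + j)) + G k') := by
            rw [← Finset.sum_range_add_sum_Ico G (show k' ≤ n by omega),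
              Finset.sum_Ico_eq_sum_range G k' n]
            congr 1
            have hnk' : n - k' = (n - k) + 1 := by omega
            rw [hnk', Finset.sum_range_succ' (fun j => G (k' + j)) (n - k)]
            have hj : ∀ j : ℕ, k' + (j + 1) = k + j := fun j => by omega
            simp only [hj, Nat.add_zero]
          have hA : ∑ i ∈ range k', G i ≤ ∑ j ∈ range k', G₁ j :=
            Finset.sum_le_sum fun i _ => hGG₁ i
          have hB : ∑ j ∈ range (n - k), G (k + j) ≤ ∑ j ∈ range (n - k), G₂ (k + j) :=
            Finset.sum_le_sum fun i _ => hGG₂ _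
          have hC : G k' ≤ max (dist (f (T k)) (f d) - δ₂) 0
              + max (dist (f d) (f (T k')) - δ₁) 0 := by
            have ek : k' + 1 = k := by omega
            simp only [hG, hδ, ek]
            exact max_sub_cross (dist_triangle _ (f d) _)
          rw [eL, eSU, eSV]
          linarith
        calc ENNReal.ofReal (∑ i ∈ range n, G i) ≤ ENNReal.ofReal (SU + SV) :=
              ENNReal.ofReal_le_ofReal hkey
          _ ≤ ENNReal.ofReal SU + ENNReal.ofReal SV := ENNReal.ofReal_add_le
          _ ≤ _ := add_le_add hL hR

lemma pTVsup_split {W : Type*} [NormedAddCommGroup W] {a b d p : ℝ} (hp : 1 ≤ p)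
    (had : a ≤ d) (hdb : d ≤ b) (f : ℝ → W) {θ : ℝ} (hθ0 : 0 < θ) (hθ1 : θ < 1) :
    pTVsup f a b p ≤ ENNReal.ofReal (θ ^ (1 - p)) * pTVsup f a d p
      + ENNReal.ofReal ((1 - θ) ^ (1 - p)) * pTVsup f d b p := by
  refine iSup_le fun δ => iSup_le fun hδ => ?_
  have hδ₁ : 0 < θ * δ := by positivity
  have hδ₂ : 0 < (1 - θ) * δ := by nlinarith
  have hsum : θ * δ + (1 - θ) * δ = δ := by ring
  have hsplit := truncVar_split f had hdb (δ₁ := θ * δ) (δ₂ := (1 - θ) * δ) hδ₁.le hδ₂.le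
  rw [hsum] at hsplit
  have key : ∀ (c : ℝ) (hc0 : 0 < c) (hc1 : c < 1) (g : ℝ → W) (x y : ℝ),
      ENNReal.ofReal (δ ^ (p - 1)) * truncVar g x y (c * δ)
        ≤ ENNReal.ofReal (c ^ (1 - p)) * pTVsup g x y p := by
    intro c hc0 hc1 g x y
    have hfac : ENNReal.ofReal (δ ^ (p - 1))
        = ENNReal.ofReal (c ^ (1 - p)) * ENNReal.ofReal ((c * δ) ^ (p - 1)) := by
      rw [← ENNReal.ofReal_mul (by positivity)]
      congr 1
      rw [Real.mul_rpow hc0.le hδ.le, ← mul_assoc, ← Real.rpow_add hc0]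
      norm_num
    rw [hfac, mul_assoc]
    refine mul_le_mul_right ?_ _
    exact le_iSup_of_le (c * δ) (le_iSup_of_le (by positivity) le_rfl)
  calc ENNReal.ofReal (δ ^ (p - 1)) * truncVar f a b δ
      ≤ ENNReal.ofReal (δ ^ (p - 1)) * (truncVar f a d (θ * δ) + truncVar f d b ((1 - θ) * δ)) :=
        mul_le_mul_right hsplit _
    _ = ENNReal.ofReal (δ ^ (p - 1)) * truncVar f a d (θ * δ)
        + ENNReal.ofReal (δ ^ (p - 1)) * truncVar f d b ((1 - θ) * δ) := mul_add _ _ _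
    _ ≤ _ := add_le_add (key θ hθ0 hθ1 f a d) (key (1 - θ) (by linarith) (by linarith) f d b)

theorem stmt_17 {W : Type*} [NormedAddCommGroup W] [NormedSpace ℝ W] [CompleteSpace W]
    (a b d p : ℝ) (hp : 1 ≤ p) (hd : d ∈ Set.Ioo a b) (f : ℝ → W) :
    pTVnorm f a b p ≤ pTVnorm f a d p + pTVnorm f d b p := by
  have hp0 : (0 : ℝ) < p := lt_of_lt_of_le one_pos hp
  obtain ⟨had, hdb⟩ := hd
  unfold pTVnorm
  refine ENNReal.le_of_forall_pos_le_add fun ε hε hfin => ?_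
  set S₁ := pTVsup f a d p with hS₁
  set S₂ := pTVsup f d b p with hS₂
  have hV₁top : S₁ ^ (1 / p) ≠ ⊤ := (ENNReal.add_lt_top.mp hfin).1.ne
  have hV₂top : S₂ ^ (1 / p) ≠ ⊤ := (ENNReal.add_lt_top.mp hfin).2.ne
  set A : ℝ := (S₁ ^ (1 / p)).toReal + (ε : ℝ) / 2 with hA
  set B : ℝ := (S₂ ^ (1 / p)).toReal + (ε : ℝ) / 2 with hB
  have hεpos : (0 : ℝ) < (ε : ℝ) := by exact_mod_cast hε
  have hApos : 0 < A := by positivity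
  have hBpos : 0 < B := by positivity
  have hABpos : 0 < A + B := by positivity
  set θ : ℝ := A / (A + B) with hθ
  have hθ0 : 0 < θ := by positivity
  have hθ1 : θ < 1 := by
    rw [hθ, div_lt_one hABpos]; linarith
  have h1θ : 1 - θ = B / (A + B) := by
    rw [hθ, eq_div_iff hABpos.ne', sub_mul, div_mul_cancel₀ _ hABpos.ne', one_mul]
    ring
  have hbound : ∀ (S : ℝ≥0∞) (C : ℝ), S ^ (1 / p) ≠ ⊤ → (S ^ (1 / p)).toReal + (ε : ℝ) / 2 = C →
      0 < C → ENNReal.ofReal ((C / (A + B)) ^ (1 - p)) * S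
        ≤ ENNReal.ofReal (C * (A + B) ^ (p - 1)) := by
    intro S C hStop hCeq hCpos
    have hSle : S ≤ ENNReal.ofReal (C ^ p) := by
      have h1 : S = (S ^ (1 / p)) ^ p := by
        rw [← ENNReal.rpow_mul, one_div_mul_cancel hp0.ne', ENNReal.rpow_one]
      have h2 : S ^ (1 / p) ≤ ENNReal.ofReal C := by
        rw [← ENNReal.ofReal_toReal hStop]
        apply ENNReal.ofReal_le_ofReal
        rw [← hCeq]
        linarith
      calc S = (S ^ (1 / p)) ^ p := h1
        _ ≤ (ENNReal.ofReal C) ^ p := ENNReal.rpow_le_rpow h2 hp0.le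
        _ = ENNReal.ofReal (C ^ p) := ENNReal.ofReal_rpow_of_pos hCpos
    calc ENNReal.ofReal ((C / (A + B)) ^ (1 - p)) * S
        ≤ ENNReal.ofReal ((C / (A + B)) ^ (1 - p)) * ENNReal.ofReal (C ^ p) :=
          mul_le_mul_right hSle _
      _ = ENNReal.ofReal ((C / (A + B)) ^ (1 - p) * C ^ p) := by
          rw [← ENNReal.ofReal_mul (by positivity)]
      _ = ENNReal.ofReal (C * (A + B) ^ (p - 1)) := by
          congr 1
          rw [Real.div_rpow hCpos.le hABpos.le]
          rw [div_mul_eq_mul_div, ← Real.rpow_add hCpos]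
          have e1 : (1 : ℝ) - p + p = 1 := by ring
          rw [e1, Real.rpow_one]
          rw [show (1 : ℝ) - p = -(p - 1) by ring, Real.rpow_neg hABpos.le, div_inv_eq_mul]
  have hmain : pTVsup f a b p ≤ ENNReal.ofReal ((A + B) ^ p) := by
    have h := pTVsup_split hp had.le hdb.le f hθ0 hθ1
    rw [h1θ] at h
    refine le_trans h (le_trans (add_le_add
      (hbound S₁ A hV₁top rfl hApos) (hbound S₂ B hV₂top rfl hBpos)) ?_)
    rw [← ENNReal.ofReal_add (by positivity) (by positivity)]
    apply ENNReal.ofReal_le_ofReal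
    have : A * (A + B) ^ (p - 1) + B * (A + B) ^ (p - 1) = (A + B) * (A + B) ^ (p - 1) := by ring
    have hpow : (A + B) ^ p = (A + B) * (A + B) ^ (p - 1) := by
      calc (A + B) ^ p = (A + B) ^ ((1 : ℝ) + (p - 1)) := by rw [show (1 : ℝ) + (p - 1) = p by ring]
        _ = (A + B) ^ (1 : ℝ) * (A + B) ^ (p - 1) := Real.rpow_add hABpos 1 (p - 1)
        _ = (A + B) * (A + B) ^ (p - 1) := by rw [Real.rpow_one]
    rw [this, hpow]
  have hfinal : pTVsup f a b p ^ (1 / p) ≤ ENNReal.ofReal (A + B) := by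
    calc pTVsup f a b p ^ (1 / p) ≤ (ENNReal.ofReal ((A + B) ^ p)) ^ (1 / p) :=
          ENNReal.rpow_le_rpow hmain (by positivity)
      _ = ENNReal.ofReal (((A + B) ^ p) ^ (1 / p)) := ENNReal.ofReal_rpow_of_pos (by positivity)
      _ = ENNReal.ofReal (A + B) := by
          rw [← Real.rpow_mul hABpos.le, mul_one_div_cancel hp0.ne', Real.rpow_one]
  refine le_trans hfinal ?_
  have : ENNReal.ofReal (A + B) = S₁ ^ (1 / p) + S₂ ^ (1 / p) + ε := by
    rw [hA, hB]
    rw [show (S₁ ^ (1 / p)).toReal + (ε : ℝ) / 2 + ((S₂ ^ (1 / p)).toReal + (ε : ℝ) / 2)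
      = (S₁ ^ (1 / p)).toReal + ((S₂ ^ (1 / p)).toReal + (ε : ℝ)) by ring]
    rw [ENNReal.ofReal_add ENNReal.toReal_nonneg (by positivity),
      ENNReal.ofReal_add ENNReal.toReal_nonneg hεpos.le,
      ENNReal.ofReal_toReal hV₁top, ENNReal.ofReal_toReal hV₂top, ENNReal.ofReal_coe_nnreal,
      add_assoc]
  rw [this]
end

section
/- Let p ≥ 1 and φ : [0,∞) → [0,∞) with φ(0) = 0, φ(t) > 0 for t > 0, sup_{0 < u ≤ s ≤ 2u ≤ 2t} φ(s)/φ(u) < ∞ for each t > 0, and Σ_{j=0}^∞ 2^{pj} φ(2^{−j}) < ∞. Then every f : [a,b] → W with sup_{δ>0} δ^{p−1} TV(f,[a,b],δ) < ∞ (i.e. f ∈ U^p([a,b],W)) has finite φ-variation: V^φ(f,[a,b]) := sup over partitions of Σ φ(‖f(tᵢ) − f(tᵢ₋₁)‖) < ∞. In particular, U^p([a,b],W) ⊆ V^q([a,b],W) for every q > p. -/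
open Set Filter Topology ENNReal

noncomputable def phiVar {W : Type*} [NormedAddCommGroup W] (φ : ℝ → ℝ) (f : ℝ → W)
    (a b : ℝ) : ℝ≥0∞ :=
  ⨆ (n : ℕ) (t : Fin (n + 1) → ℝ) (_ : StrictMono t) (_ : ∀ i, t i ∈ Set.Icc a b),
    ENNReal.ofReal (∑ i : Fin n, φ ‖f (t i.succ) - f (t i.castSucc)‖)

theorem aux_19 {W : Type*} [NormedAddCommGroup W]
    (a b p : ℝ) (hp : 1 ≤ p) (φ : ℝ → ℝ)
    (hφ0 : φ 0 = 0) (hφpos : ∀ t : ℝ, 0 < t → 0 < φ t)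
    (hdoubling : ∀ t : ℝ, 0 < t → ∃ C : ℝ, ∀ u s : ℝ,
      0 < u → u ≤ s → s ≤ 2 * u → u ≤ t → φ s / φ u ≤ C)
    (hsum : Summable (fun j : ℕ => (2 : ℝ) ^ (p * (j : ℝ)) * φ ((2 : ℝ) ^ (-(j : ℝ)))))
    (f : ℝ → W) (hf : pTVsup f a b p < ⊤) :
    phiVar φ f a b < ⊤ := by
  classical
  set M := (pTVsup f a b p).toReal with hMdef
  have hM : pTVsup f a b p ≠ ⊤ := hf.ne
  have hK0 : 0 ≤ M := ENNReal.toReal_nonneg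
  have two_pos : (0:ℝ) < 2 := by norm_num
  -- key real inequality
  have key : ∀ δ : ℝ, 0 < δ → ∀ (n : ℕ) (t : Fin (n+1) → ℝ), StrictMono t →
      (∀ i, t i ∈ Set.Icc a b) →
      (∑ i : Fin n, max (dist (f (t i.succ)) (f (t i.castSucc)) - δ) 0) ≤ M * δ ^ (1 - p) := by
    intro δ hδ n t ht htmem
    set S := ∑ i : Fin n, max (dist (f (t i.succ)) (f (t i.castSucc)) - δ) 0 with hS
    have hS0 : 0 ≤ S := Finset.sum_nonneg fun i _ => le_max_right _ _
    have h1 : ENNReal.ofReal S ≤ truncVar f a b δ := by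
      exact le_iSup_of_le n <| le_iSup_of_le t <| le_iSup_of_le ht <| le_iSup_of_le htmem le_rfl
    have h2 : ENNReal.ofReal (δ ^ (p-1)) * ENNReal.ofReal S ≤ pTVsup f a b p := by
      refine le_trans (mul_le_mul_right h1 _) ?_
      exact le_iSup_of_le δ (le_iSup_of_le hδ le_rfl)
    rw [← ENNReal.ofReal_mul (by positivity)] at h2
    have h3 : δ ^ (p-1) * S ≤ M := (ENNReal.ofReal_le_iff_le_toReal hM).mp h2
    have hpow : δ ^ (1-p) * δ ^ (p-1) = 1 := by
      rw [← Real.rpow_add hδ]; norm_num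
    calc S = δ^(1-p) * (δ^(p-1) * S) := by rw [← mul_assoc, hpow, one_mul]
    _ ≤ δ^(1-p) * M := mul_le_mul_of_nonneg_left h3 (by positivity)
    _ = M * δ^(1-p) := mul_comm _ _
  obtain ⟨m, hm⟩ : ∃ m : ℕ, M + 1 ≤ (2:ℝ) ^ (m:ℝ) := by
    obtain ⟨m, hm⟩ := pow_unbounded_of_one_lt (M+1) (by norm_num : (1:ℝ) < 2)
    exact ⟨m, by rw [Real.rpow_natCast]; exact hm.le⟩
  set D : ℝ := (2:ℝ) ^ (m:ℝ) with hD
  have hD0 : 0 < D := by positivity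
  obtain ⟨C, hC⟩ := hdoubling D hD0
  have hC0 : 0 < C := by
    have h := hC D D hD0 le_rfl (by linarith) le_rfl
    rw [div_self (ne_of_gt (hφpos D hD0))] at h
    linarith
  set u : ℕ → ℝ := fun j => (2:ℝ) ^ ((m:ℝ) - 1 - j) with hu
  have hu0 : ∀ j, 0 < u j := fun j => by positivity
  set lvl : ℝ → ℕ := fun d => ⌈(m:ℝ) - 1 - Real.logb 2 d⌉₊ with hlvldef
  have hlvl : ∀ d : ℝ, 0 < d → d ≤ D → u (lvl d) ≤ d ∧ d ≤ 2 * u (lvl d) := by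
    intro d hd hdD
    have hlogb : Real.logb 2 d ≤ m := by
      have h1 : Real.logb 2 d ≤ Real.logb 2 D :=
        Real.logb_le_logb_of_le (by norm_num) hd hdD
      rwa [hD, Real.logb_rpow two_pos (by norm_num)] at h1
    set x := (m:ℝ) - 1 - Real.logb 2 d with hx
    have h1 : x ≤ (lvl d : ℝ) := Nat.le_ceil x
    have h2 : (lvl d : ℝ) ≤ x + 1 := by
      rcases le_or_gt 0 x with hxx | hxx
      · exact (Nat.ceil_lt_add_one hxx).le
      · have hz : lvl d = 0 := Nat.ceil_eq_zero.mpr hxx.le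
        have hxm1 : -1 ≤ x := by
          simp only [hx]; linarith
        rw [hz]
        push_cast
        linarith
    have hrl : (2:ℝ) ^ Real.logb 2 d = d := Real.rpow_logb two_pos (by norm_num) hd
    constructor
    · have : (m:ℝ) - 1 - lvl d ≤ Real.logb 2 d := by simp only [hx] at h1; linarith
      calc u (lvl d) = (2:ℝ) ^ ((m:ℝ) - 1 - lvl d) := rfl
      _ ≤ (2:ℝ) ^ Real.logb 2 d := Real.rpow_le_rpow_of_exponent_le (by norm_num) this
      _ = d := hrl
    · have hle : Real.logb 2 d ≤ (m:ℝ) - lvl d := by simp only [hx] at h2; linarith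
      have h2u : 2 * u (lvl d) = (2:ℝ) ^ ((m:ℝ) - lvl d) := by
        rw [show (m:ℝ) - lvl d = 1 + ((m:ℝ) - 1 - lvl d) by ring, Real.rpow_add two_pos,
          Real.rpow_one]
      calc d = (2:ℝ) ^ Real.logb 2 d := hrl.symm
      _ ≤ (2:ℝ) ^ ((m:ℝ) - lvl d) := Real.rpow_le_rpow_of_exponent_le (by norm_num) hle
      _ = 2 * u (lvl d) := h2u.symm
  -- summable majorant series
  have hF : Summable (fun j : ℕ => (2:ℝ) ^ (p * (j:ℝ)) * φ ((2:ℝ) ^ ((m:ℝ) - 1 - j))) := by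
    apply (summable_nat_add_iff m).mp
    have hfe : (fun k : ℕ => (2:ℝ) ^ (p * ((k + m : ℕ):ℝ)) * φ ((2:ℝ) ^ ((m:ℝ) - 1 - ((k+m:ℕ):ℝ))))
        = fun k : ℕ => (2:ℝ)^(p*((m:ℝ)-1)) *
          ((2:ℝ) ^ (p * (((k+1:ℕ)):ℝ)) * φ ((2:ℝ) ^ (-((k+1:ℕ):ℝ)))) := by
      funext k
      push_cast
      rw [show (m:ℝ) - 1 - ((k:ℝ) + m) = -((k:ℝ)+1) by ring, ← mul_assoc, ← Real.rpow_add two_pos]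
      ring_nf
    exact hfe ▸ (((summable_nat_add_iff 1).mpr hsum).mul_left _)
  set G : ℕ → ℝ := fun j => M * (u j / 2) ^ (-p) * (C * φ (u j)) with hG
  have hG0 : ∀ j, 0 ≤ G j := by
    intro j
    have := (hφpos (u j) (hu0 j)).le
    have : (0:ℝ) ≤ (u j / 2) ^ (-p) := Real.rpow_nonneg (by positivity) _
    positivity
  have hGsum : Summable G := by
    have hGe : G = fun j : ℕ => (M * C * (2:ℝ)^(((m:ℝ)-2)*(-p))) *
        ((2:ℝ)^(p*(j:ℝ)) * φ ((2:ℝ)^((m:ℝ)-1-j))) := by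
      funext j
      have h1 : u j / 2 = (2:ℝ) ^ ((m:ℝ)-2-(j:ℝ)) := by
        rw [show (m:ℝ)-2-(j:ℝ) = ((m:ℝ)-1-(j:ℝ)) - 1 by ring, Real.rpow_sub two_pos,
          Real.rpow_one]
      have h2 : (2:ℝ)^(((m:ℝ)-2)*(-p)) * (2:ℝ)^(p*(j:ℝ)) = (u j / 2) ^ (-p) := by
        rw [h1, ← Real.rpow_mul (by norm_num : (0:ℝ) ≤ 2), ← Real.rpow_add two_pos]
        congr 1; ring
      show M * (u j / 2) ^ (-p) * (C * φ (u j)) = _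
      rw [← h2]; ring
    rw [hGe]
    exact hF.mul_left _
  have main : ∀ (n : ℕ) (t : Fin (n+1) → ℝ), StrictMono t → (∀ i, t i ∈ Set.Icc a b) →
      ∑ i : Fin n, φ ‖f (t i.succ) - f (t i.castSucc)‖ ≤ ∑' j, G j := by
    intro n t ht htmem
    set d : Fin n → ℝ := fun i => ‖f (t i.succ) - f (t i.castSucc)‖ with hd
    have hd0 : ∀ i, 0 ≤ d i := fun i => norm_nonneg _
    have hdD : ∀ i, d i ≤ D := by
      intro i
      have h1 := key 1 one_pos n t ht htmem
      have h2 : max (d i - 1) 0 ≤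
          ∑ i : Fin n, max (dist (f (t i.succ)) (f (t i.castSucc)) - 1) 0 := by
        have h := Finset.single_le_sum
          (f := fun i : Fin n => max (dist (f (t i.succ)) (f (t i.castSucc)) - 1) 0)
          (fun i _ => le_max_right _ _) (Finset.mem_univ i)
        simpa [hd, dist_eq_norm] using h
      have h3 : d i - 1 ≤ M * (1:ℝ) ^ (1-p) := le_trans (le_max_left _ _) (h2.trans h1)
      rw [Real.one_rpow, mul_one] at h3
      linarith
    have hsplit : ∑ i : Fin n, φ (d i) =
        ∑ i ∈ Finset.univ.filter (fun i => 0 < d i), φ (d i) := by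
      refine (Finset.sum_filter_of_ne ?_).symm
      intro i _ hne
      rcases (hd0 i).lt_or_eq with h | h
      · exact h
      · exact absurd (by rw [← h]; exact hφ0) hne
    rw [show (∑ i : Fin n, φ ‖f (t i.succ) - f (t i.castSucc)‖) = ∑ i : Fin n, φ (d i) from rfl,
      hsplit]
    set s := Finset.univ.filter (fun i : Fin n => 0 < d i) with hs
    have hmaps : ∀ i ∈ s, lvl (d i) ∈ Finset.image (fun i => lvl (d i)) s :=
      fun i hi => Finset.mem_image_of_mem _ hi
    rw [← Finset.sum_fiberwise_of_maps_to hmaps (fun i => φ (d i))]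
    refine le_trans (Finset.sum_le_sum ?_) (Summable.sum_le_tsum _ (fun j _ => hG0 j) hGsum)
    intro j hj
    set fib := s.filter (fun i => lvl (d i) = j) with hfib
    have huj : 0 < u j := hu0 j
    have hfib_d : ∀ i ∈ fib, u j ≤ d i ∧ d i ≤ 2 * u j := by
      intro i hi
      obtain ⟨hi_s, hi_lvl⟩ := Finset.mem_filter.mp hi
      have hpos : 0 < d i := (Finset.mem_filter.mp hi_s).2
      have h := hlvl (d i) hpos (hdD i)
      rwa [hi_lvl] at h
    have hujD : u j ≤ D := by
      apply Real.rpow_le_rpow_of_exponent_le (by norm_num)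
      have : (0:ℝ) ≤ (j:ℝ) := Nat.cast_nonneg j
      linarith
    have hφb : ∀ i ∈ fib, φ (d i) ≤ C * φ (u j) := by
      intro i hi
      obtain ⟨h1, h2⟩ := hfib_d i hi
      have h := hC (u j) (d i) huj h1 h2 hujD
      rwa [div_le_iff₀ (hφpos _ huj)] at h
    have hcard : (fib.card : ℝ) * (u j / 2) ≤ M * (u j / 2) ^ (1 - p) := by
      have h1 : ∀ i ∈ fib, u j / 2 ≤
          max (dist (f (t i.succ)) (f (t i.castSucc)) - u j / 2) 0 := by
        intro i hi
        have hge := (hfib_d i hi).1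
        rw [dist_eq_norm]
        have h2 : u j / 2 ≤ d i - u j / 2 := by linarith
        exact le_trans h2 (le_max_left _ _)
      calc (fib.card : ℝ) * (u j / 2) = ∑ _i ∈ fib, u j / 2 := by
            rw [Finset.sum_const, nsmul_eq_mul]
      _ ≤ ∑ i ∈ fib, max (dist (f (t i.succ)) (f (t i.castSucc)) - u j / 2) 0 :=
          Finset.sum_le_sum h1
      _ ≤ ∑ i : Fin n, max (dist (f (t i.succ)) (f (t i.castSucc)) - u j / 2) 0 :=
          Finset.sum_le_sum_of_subset_of_nonneg (Finset.subset_univ _)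
            (fun _ _ _ => le_max_right _ _)
      _ ≤ M * (u j / 2) ^ (1 - p) := key _ (by positivity) n t ht htmem
    have hcard' : (fib.card : ℝ) ≤ M * (u j / 2) ^ (-p) := by
      have hu2 : (0:ℝ) < u j / 2 := by positivity
      have hsplit2 : (u j / 2) ^ (1-p) = (u j / 2) ^ (-p) * (u j / 2) := by
        rw [← Real.rpow_add_one hu2.ne' (-p)]
        congr 1; ring
      rw [hsplit2, ← mul_assoc] at hcard
      exact le_of_mul_le_mul_right hcard hu2
    calc ∑ i ∈ fib, φ (d i) ≤ ∑ _i ∈ fib, C * φ (u j) := Finset.sum_le_sum hφb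
    _ = (fib.card : ℝ) * (C * φ (u j)) := by rw [Finset.sum_const, nsmul_eq_mul]
    _ ≤ M * (u j / 2) ^ (-p) * (C * φ (u j)) := by
        apply mul_le_mul_of_nonneg_right hcard'
        have := (hφpos (u j) huj).le
        positivity
    _ = G j := rfl
  have hle : phiVar φ f a b ≤ ENNReal.ofReal (∑' j, G j) := by
    refine iSup_le fun n => iSup_le fun t => iSup_le fun ht => iSup_le fun htmem => ?_
    exact ENNReal.ofReal_le_ofReal (main n t ht htmem)
  exact lt_of_le_of_lt hle ENNReal.ofReal_lt_top

theorem stmt_19 {W : Type*} [NormedAddCommGroup W] [NormedSpace ℝ W] [CompleteSpace W]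
    (a b p : ℝ) (hab : a < b) (hp : 1 ≤ p) (φ : ℝ → ℝ)
    (hφ0 : φ 0 = 0) (hφpos : ∀ t : ℝ, 0 < t → 0 < φ t)
    (hdoubling : ∀ t : ℝ, 0 < t → ∃ C : ℝ, ∀ u s : ℝ,
      0 < u → u ≤ s → s ≤ 2 * u → u ≤ t → φ s / φ u ≤ C)
    (hsum : Summable (fun j : ℕ => (2 : ℝ) ^ (p * (j : ℝ)) * φ ((2 : ℝ) ^ (-(j : ℝ)))))
    (f : ℝ → W) (hf : pTVsup f a b p < ⊤) :
    phiVar φ f a b < ⊤ ∧ ∀ q : ℝ, p < q → phiVar (fun x => x ^ q) f a b < ⊤ := by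
  constructor
  · exact aux_19 a b p hp φ hφ0 hφpos hdoubling hsum f hf
  · intro q hq
    have hq0 : 0 < q := by linarith
    apply aux_19 a b p hp _ ?_ ?_ ?_ ?_ f hf
    · exact Real.zero_rpow hq0.ne'
    · intro t ht; exact Real.rpow_pos_of_pos ht q
    · intro t ht
      refine ⟨(2:ℝ)^q, fun u s hu hus hs2u hut => ?_⟩
      rw [← Real.div_rpow (by linarith) hu.le]
      exact Real.rpow_le_rpow (div_nonneg (by linarith) hu.le)
        (by rw [div_le_iff₀ hu]; linarith) hq0.le
    · have he : (fun j : ℕ => (2:ℝ)^(p*(j:ℝ)) * ((2:ℝ)^(-(j:ℝ)))^q)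
          = fun j : ℕ => ((2:ℝ)^(p-q))^j := by
        funext j
        rw [← Real.rpow_natCast ((2:ℝ)^(p-q)) j, ← Real.rpow_mul (by norm_num : (0:ℝ) ≤ 2),
          ← Real.rpow_mul (by norm_num : (0:ℝ) ≤ 2), ← Real.rpow_add (by norm_num : (0:ℝ) < 2)]
        congr 1; ring
      rw [he]
      refine summable_geometric_of_lt_one (by positivity) ?_
      exact Real.rpow_lt_one_of_one_lt_of_neg (by norm_num) (by linarith)
end
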